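/- arXiv:2112.05855 — 6 statements merged into one kernel-verified Lean document; each statement's English description precedes it below -/
import Mathlib

section
/- Let N = pM where p is prime, p does not divide M, and let ζ_M, ζ_p be primitive M-th and p-th roots of unity. Then for integers a_{mn}, Σ_{m=1}^M Σ_{n=1}^p a_{mn} ζ_M^m ζ_p^n = 0 if and only if for every n with 1 < n ≤ p, Σ_{m=1}^M a_{mn} ζ_M^m = Σ_{m=1}^M a_{m1} ζ_M^m. -/
set_option maxHeartbeats 1000000
open Polynomial IntermediateField

lemma minpoly_deg_aux (p M : ℕ) (hp : p.Prime) (hpM : ¬ p ∣ M) (ζM ζp : ℂ)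
    (hζM : IsPrimitiveRoot ζM M) (hζp : IsPrimitiveRoot ζp p) :
    (p - 1 : ℕ) ≤ (minpoly ℚ⟮ζM⟯ ζp).natDegree := by
  have hM0 : M ≠ 0 := by rintro rfl; exact hpM (dvd_zero p)
  have hp0 : p ≠ 0 := hp.ne_zero
  have hcop : Nat.Coprime M p := (hp.coprime_iff_not_dvd.mpr hpM).symm
  -- primitive root of order M * p
  have hmul : IsPrimitiveRoot (ζM * ζp) (M * p) := by
    have := (Commute.all ζM ζp).orderOf_mul_eq_mul_orderOf_of_coprime
      (by rw [← hζM.eq_orderOf, ← hζp.eq_orderOf]; exact hcop)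
    rw [← hζM.eq_orderOf, ← hζp.eq_orderOf] at this
    rw [this.symm]; exact IsPrimitiveRoot.orderOf _
  -- integrality
  have hiM : IsIntegral ℚ ζM := ⟨X ^ M - 1, monic_X_pow_sub_C _ hM0, by
    simp [hζM.pow_eq_one]⟩
  have hiN : IsIntegral ℚ (ζM * ζp) := ⟨X ^ (M * p) - 1,
    monic_X_pow_sub_C _ (by positivity), by simp [hmul.pow_eq_one]⟩
  have hip : IsIntegral ℚ⟮ζM⟯ ζp := ⟨X ^ p - 1, monic_X_pow_sub_C _ hp0, by
    simp [hζp.pow_eq_one]⟩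
  have finM : Module.finrank ℚ ℚ⟮ζM⟯ = M.totient := by
    rw [adjoin.finrank hiM, ← Polynomial.cyclotomic_eq_minpoly_rat hζM (Nat.pos_of_ne_zero hM0),
      natDegree_cyclotomic]
  have finN : Module.finrank ℚ ℚ⟮ζM * ζp⟯ = M.totient * (p - 1) := by
    rw [adjoin.finrank hiN, ← Polynomial.cyclotomic_eq_minpoly_rat hmul (by positivity),
      natDegree_cyclotomic, Nat.totient_mul hcop, Nat.totient_prime hp]
  haveI : FiniteDimensional ℚ ℚ⟮ζM⟯ := adjoin.finiteDimensional hiM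
  haveI : FiniteDimensional ℚ⟮ζM⟯ ℚ⟮ζM⟯⟮ζp⟯ := adjoin.finiteDimensional hip
  haveI : FiniteDimensional ℚ ((ℚ⟮ζM⟯⟮ζp⟯).restrictScalars ℚ) := by
    exact FiniteDimensional.trans ℚ ℚ⟮ζM⟯ ℚ⟮ζM⟯⟮ζp⟯
  have hle : ℚ⟮ζM * ζp⟯ ≤ (ℚ⟮ζM⟯⟮ζp⟯).restrictScalars ℚ := by
    rw [adjoin_simple_le_iff]
    exact mul_mem ((ℚ⟮ζM⟯⟮ζp⟯).algebraMap_mem ⟨ζM, mem_adjoin_simple_self ℚ ζM⟩)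
      (mem_adjoin_simple_self _ ζp)
  have hfle : Module.finrank ℚ ℚ⟮ζM * ζp⟯ ≤
      Module.finrank ℚ ((ℚ⟮ζM⟯⟮ζp⟯).restrictScalars ℚ) := by
    haveI : Module.Finite ℚ
        (Subalgebra.toSubmodule ((ℚ⟮ζM⟯⟮ζp⟯).restrictScalars ℚ).toSubalgebra) :=
      FiniteDimensional.subalgebra_toSubmodule inferInstance
    have h2 := Submodule.finrank_mono (R := ℚ) (M := ℂ)
      (s := Subalgebra.toSubmodule (ℚ⟮ζM * ζp⟯).toSubalgebra)
      (t := Subalgebra.toSubmodule ((ℚ⟮ζM⟯⟮ζp⟯).restrictScalars ℚ).toSubalgebra) hle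
    rwa [Subalgebra.finrank_toSubmodule, Subalgebra.finrank_toSubmodule] at h2
  have htow : Module.finrank ℚ ℚ⟮ζM⟯ * Module.finrank ℚ⟮ζM⟯ ℚ⟮ζM⟯⟮ζp⟯ =
      Module.finrank ℚ ((ℚ⟮ζM⟯⟮ζp⟯).restrictScalars ℚ) :=
    Module.finrank_mul_finrank ℚ ℚ⟮ζM⟯ ℚ⟮ζM⟯⟮ζp⟯
  rw [← htow, finM, finN] at hfle
  rw [← adjoin.finrank hip]
  exact Nat.le_of_mul_le_mul_left hfle (Nat.totient_pos.mpr (Nat.pos_of_ne_zero hM0))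

/-- Lenstra's lemma: for `N = p * M` with `p` prime not dividing `M`, a vanishing
integer combination of the products `ζ_M^m ζ_p^n` occurs iff all the `p` partial
cyclotomic integers in `ζ_M` coincide. -/
theorem lenstra_vanishing_sum_two_coprime_orders
    (p M N : ℕ) (hp : p.Prime) (hpM : ¬ p ∣ M) (hN : N = p * M)
    (ζM ζp : ℂ) (hζM : IsPrimitiveRoot ζM M) (hζp : IsPrimitiveRoot ζp p)
    (a : ℕ → ℕ → ℤ) :
    (∑ m ∈ Finset.Icc 1 M, ∑ n ∈ Finset.Icc 1 p,
        (a m n : ℂ) * ζM ^ m * ζp ^ n = 0) ↔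
    (∀ n ∈ Finset.Icc 2 p,
        ∑ m ∈ Finset.Icc 1 M, (a m n : ℂ) * ζM ^ m
          = ∑ m ∈ Finset.Icc 1 M, (a m 1 : ℂ) * ζM ^ m) := by
  have hdeg := minpoly_deg_aux p M hp hpM ζM ζp hζM hζp

  have hp2 : 2 ≤ p := hp.two_le
  set c : ℕ → ℂ := fun n => ∑ m ∈ Finset.Icc 1 M, (a m n : ℂ) * ζM ^ m with hc
  have hcmem : ∀ n, c n ∈ ℚ⟮ζM⟯ := fun n =>
    sum_mem fun m _ => mul_mem (IntermediateField.intCast_mem _ _)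
      (pow_mem (mem_adjoin_simple_self ℚ ζM) m)
  have hrw : ∑ m ∈ Finset.Icc 1 M, ∑ n ∈ Finset.Icc 1 p,
      (a m n : ℂ) * ζM ^ m * ζp ^ n = ∑ n ∈ Finset.Icc 1 p, c n * ζp ^ n := by
    rw [Finset.sum_comm]
    exact Finset.sum_congr rfl fun n _ => by rw [Finset.sum_mul]
  have hgeom : ∑ n ∈ Finset.Icc 1 p, ζp ^ n = 0 := by
    have h0 : ∑ i ∈ Finset.range p, ζp ^ i = 0 := hζp.geom_sum_eq_zero (by omega)
    calc ∑ n ∈ Finset.Icc 1 p, ζp ^ n = ∑ i ∈ Finset.range p, ζp ^ (1 + i) := by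
          rw [← Finset.Ico_add_one_right_eq_Icc, Finset.sum_Ico_eq_sum_range]
          norm_num
      _ = ζp * ∑ i ∈ Finset.range p, ζp ^ i := by
          rw [Finset.mul_sum]; exact Finset.sum_congr rfl fun i _ => by ring
      _ = 0 := by rw [h0, mul_zero]
  rw [hrw]
  constructor
  · intro h n hn
    rw [Finset.mem_Icc] at hn
    -- the shifted sum vanishes
    have hd : ∑ n ∈ Finset.Icc 1 p, (c n - c 1) * ζp ^ n = 0 := by
      have : ∑ n ∈ Finset.Icc 1 p, (c n - c 1) * ζp ^ n
          = ∑ n ∈ Finset.Icc 1 p, c n * ζp ^ n - c 1 * ∑ n ∈ Finset.Icc 1 p, ζp ^ n := by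
        rw [Finset.mul_sum, ← Finset.sum_sub_distrib]
        exact Finset.sum_congr rfl fun n _ => by ring
      rw [this, h, hgeom, mul_zero, sub_zero]
    have hsplit : ∑ n ∈ Finset.Icc 2 p, (c n - c 1) * ζp ^ n = 0 := by
      have hins : Finset.Icc 1 p = insert 1 (Finset.Icc 2 p) := by
        ext x; simp only [Finset.mem_Icc, Finset.mem_insert]; omega
      rw [hins, Finset.sum_insert (by simp)] at hd
      simpa using hd
    have hshift : ζp ^ 2 * ∑ i ∈ Finset.range (p - 1), (c (2 + i) - c 1) * ζp ^ i = 0 := by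
      rw [Finset.mul_sum, ← hsplit, ← Finset.Ico_add_one_right_eq_Icc, Finset.sum_Ico_eq_sum_range]
      have hpp : p + 1 - 2 = p - 1 := by omega
      rw [hpp]
      exact Finset.sum_congr rfl fun i _ => by ring
    have hz : ∑ i ∈ Finset.range (p - 1), (c (2 + i) - c 1) * ζp ^ i = 0 := by
      have hζp0 : ζp ^ 2 ≠ 0 := pow_ne_zero _ (fun h0 => by
        simpa [h0, zero_pow hp.ne_zero] using hζp.pow_eq_one)
      exact (mul_eq_zero.mp hshift).resolve_left hζp0
    -- build the polynomial over ℚ⟮ζM⟯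
    set q : Polynomial ℚ⟮ζM⟯ := ∑ i ∈ Finset.range (p - 1),
      Polynomial.C (⟨c (2 + i) - c 1, sub_mem (hcmem _) (hcmem 1)⟩ : ℚ⟮ζM⟯) * Polynomial.X ^ i
      with hq
    have hip : IsIntegral ℚ⟮ζM⟯ ζp := ⟨X ^ p - 1, monic_X_pow_sub_C _ hp.ne_zero, by
      simp [hζp.pow_eq_one]⟩
    have haev : Polynomial.aeval ζp q = 0 := by
      rw [hq, map_sum]
      rw [← hz]
      refine Finset.sum_congr rfl fun i _ => ?_
      simp only [map_mul, map_pow, Polynomial.aeval_C, Polynomial.aeval_X]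
      rfl
    have hq0 : q = 0 := by
      by_contra hne
      have h1 := minpoly.degree_le_of_ne_zero ℚ⟮ζM⟯ ζp hne haev
      have h2 : q.natDegree ≤ p - 2 := by
        refine Polynomial.natDegree_sum_le_of_forall_le _ _ fun i hi => ?_
        refine le_trans (Polynomial.natDegree_C_mul_le _ _) ?_
        rw [Polynomial.natDegree_X_pow]
        have := Finset.mem_range.mp hi
        omega
      have h3 := Polynomial.natDegree_le_natDegree h1
      omega
    have hcoeff : c n - c 1 = 0 := by
      have hn2 : n - 2 ∈ Finset.range (p - 1) := by
        rw [Finset.mem_range]; omega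
      have : q.coeff (n - 2) = ⟨c (2 + (n - 2)) - c 1, sub_mem (hcmem _) (hcmem 1)⟩ := by
        rw [hq, Polynomial.finset_sum_coeff]
        rw [Finset.sum_eq_single (n - 2)]
        · simp
        · intro b _ hb
          rw [Polynomial.coeff_C_mul, Polynomial.coeff_X_pow,
            if_neg (fun hbb : n - 2 = b => hb hbb.symm), mul_zero]
        · intro hcon; exact absurd hn2 hcon
      rw [hq0] at this
      have h2n : 2 + (n - 2) = n := by omega
      rw [h2n] at this
      simpa using congrArg (Subtype.val) this.symm
    exact sub_eq_zero.mp hcoeff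
  · intro h
    have : ∀ n ∈ Finset.Icc 1 p, c n * ζp ^ n = c 1 * ζp ^ n := by
      intro n hn
      rw [Finset.mem_Icc] at hn
      rcases eq_or_lt_of_le hn.1 with h1 | h1
      · rw [← h1]
      · have hcn : c n = c 1 := h n (Finset.mem_Icc.mpr ⟨h1, hn.2⟩)
        rw [hcn]
    rw [Finset.sum_congr rfl this, ← Finset.mul_sum, hgeom, mul_zero]
end

section
/- Let N be an integer and M the product of all distinct primes dividing N. Let ζ_M and ζ_N be primitive M-th and N-th roots of unity. Then for integers a_{mn}, Σ_{m=1}^{M} Σ_{n=1}^{N/M} a_{mn} ζ_M^m ζ_N^n = 0 if and only if Σ_{m=1}^M a_{mn} ζ_M^m = 0 for every n with 1 ≤ n ≤ N/M. -/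
open Finset IntermediateField Module

private lemma lenstra_totient_aux (N : ℕ) (hN : 0 < N) :
    Nat.totient N = Nat.totient (∏ q ∈ N.primeFactors, q) * (N / ∏ q ∈ N.primeFactors, q) := by
  set M := ∏ q ∈ N.primeFactors, q with hM
  have hMpos : 0 < M := Finset.prod_pos fun p hp => (Nat.prime_of_mem_primeFactors hp).pos
  have hMfac : M.primeFactors = N.primeFactors :=
    Nat.primeFactors_prod fun p hp => Nat.prime_of_mem_primeFactors hp
  have hφM : Nat.totient M = ∏ p ∈ N.primeFactors, (p - 1) := by
    rw [Nat.totient_eq_div_primeFactors_mul, hMfac, ← hM, Nat.div_self hMpos, one_mul]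
  rw [Nat.totient_eq_div_primeFactors_mul N, hφM, ← hM]
  ring

set_option maxHeartbeats 1000000 in
/-- Lenstra's lemma: let `M` be the product of the distinct primes dividing `N`.
A vanishing integer combination of products `ζ_M^m ζ_N^n` occurs iff each of the
`N/M` partial cyclotomic integers in `ζ_M` vanishes. -/
theorem lenstra_vanishing_sum_radical
    (N M : ℕ) (hM : M = ∏ q ∈ N.primeFactors, q)
    (ζM ζN : ℂ) (hζM : IsPrimitiveRoot ζM M) (hζN : IsPrimitiveRoot ζN N)
    (a : ℕ → ℕ → ℤ) :
    (∑ m ∈ Finset.Icc 1 M, ∑ n ∈ Finset.Icc 1 (N / M),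
        (a m n : ℂ) * ζM ^ m * ζN ^ n = 0) ↔
    (∀ n ∈ Finset.Icc 1 (N / M),
        ∑ m ∈ Finset.Icc 1 M, (a m n : ℂ) * ζM ^ m = 0) := by
  classical
  rcases Nat.eq_zero_or_pos N with rfl | hN
  · simp
  have hMpos : 0 < M := hM ▸ Finset.prod_pos fun p hp => (Nat.prime_of_mem_primeFactors hp).pos
  set t := N / M with ht
  constructor
  · intro h
    -- set up the field K = ℚ(ζM)
    have hζMint : IsIntegral ℚ ζM := (hζM.isIntegral hMpos).tower_top
    have hζNint : IsIntegral ℚ ζN := (hζN.isIntegral hN).tower_top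
    set K : IntermediateField ℚ ℂ := ℚ⟮ζM⟯ with hK
    have hζMK : ζM ∈ K := mem_adjoin_simple_self ℚ ζM
    haveI : FiniteDimensional ℚ K := adjoin.finiteDimensional hζMint
    have hζNintK : IsIntegral K ζN := hζNint.tower_top
    haveI : FiniteDimensional K K⟮ζN⟯ := adjoin.finiteDimensional hζNintK
    -- degree computations
    have hfK : finrank ℚ K = Nat.totient M := by
      rw [hK, adjoin.finrank hζMint, ← Polynomial.cyclotomic_eq_minpoly_rat hζM hMpos,
        Polynomial.natDegree_cyclotomic]
    have hfQN : finrank ℚ ℚ⟮ζN⟯ = Nat.totient N := by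
      rw [adjoin.finrank hζNint, ← Polynomial.cyclotomic_eq_minpoly_rat hζN hN,
        Polynomial.natDegree_cyclotomic]
    -- ℚ(ζN) ⊆ K(ζN) (viewed over ℚ)
    have hle : (ℚ⟮ζN⟯ : IntermediateField ℚ ℂ) ≤ (K⟮ζN⟯).restrictScalars ℚ := by
      rw [adjoin_simple_le_iff]
      exact mem_adjoin_simple_self K ζN
    haveI hfinKN : FiniteDimensional ℚ K⟮ζN⟯ := Module.Finite.trans K K⟮ζN⟯
    have hmono : Nat.totient N ≤ finrank ℚ K⟮ζN⟯ := by
      set f : K⟮ζN⟯ →ₗ[ℚ] ℂ := (IsScalarTower.toAlgHom ℚ K⟮ζN⟯ ℂ).toLinearMap with hf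
      have hinjf : Function.Injective f := RingHom.injective (algebraMap (K⟮ζN⟯) ℂ)
      have hrange : Subalgebra.toSubmodule (ℚ⟮ζN⟯ : IntermediateField ℚ ℂ).toSubalgebra
          ≤ LinearMap.range f := by
        intro x hx
        exact ⟨⟨x, hle ((Subalgebra.mem_toSubmodule _).1 hx)⟩, rfl⟩
      haveI : Module.Finite ℚ (LinearMap.range f) := Module.Finite.range f
      calc Nat.totient N
          = finrank ℚ (Subalgebra.toSubmodule (ℚ⟮ζN⟯ : IntermediateField ℚ ℂ).toSubalgebra) := by
            rw [Subalgebra.finrank_toSubmodule, finrank_eq_finrank_subalgebra, hfQN]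
        _ ≤ finrank ℚ (LinearMap.range f) := Submodule.finrank_mono hrange
        _ = finrank ℚ K⟮ζN⟯ := LinearMap.finrank_range_of_inj hinjf
    have htower : finrank ℚ K * finrank K K⟮ζN⟯ = finrank ℚ K⟮ζN⟯ :=
      Module.finrank_mul_finrank ℚ K K⟮ζN⟯
    have hdeg : t ≤ (minpoly K ζN).natDegree := by
      rw [← adjoin.finrank hζNintK]
      have h1 : Nat.totient M * t ≤ Nat.totient M * finrank K K⟮ζN⟯ := by
        calc Nat.totient M * t = Nat.totient N := by
              rw [lenstra_totient_aux N hN, ← hM, ← ht]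
          _ ≤ finrank ℚ K⟮ζN⟯ := hmono
          _ = Nat.totient M * finrank K K⟮ζN⟯ := by rw [← htower, hfK]
      exact Nat.le_of_mul_le_mul_left h1 (Nat.totient_pos.2 hMpos)
    -- linear independence of powers of ζN over K
    have hind := linearIndependent_pow (K := K) (S := ℂ) ζN
    -- the coefficients
    have hcmem : ∀ n : ℕ, (∑ m ∈ Finset.Icc 1 M, (a m n : ℂ) * ζM ^ m) ∈ K := fun n =>
      sum_mem fun m _ => mul_mem (intCast_mem K _) (pow_mem hζMK m)
    set c : ℕ → K := fun n => ⟨_, hcmem n⟩ with hc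
    -- rewrite the hypothesis
    have hIcc : Finset.Icc 1 t = (Finset.range t).image (fun i => i + 1) := by
      ext x
      simp only [Finset.mem_Icc, Finset.mem_image, Finset.mem_range]
      constructor
      · rintro ⟨h1, h2⟩; exact ⟨x - 1, by omega, by omega⟩
      · rintro ⟨i, hi, rfl⟩; omega
    have h0 : ∑ i ∈ Finset.range t, (c (i + 1) : ℂ) * ζN ^ i = 0 := by
      have hswap : ∑ n ∈ Finset.Icc 1 t, (c n : ℂ) * ζN ^ n = 0 := by
        rw [← h, Finset.sum_comm]
        exact Finset.sum_congr rfl fun n _ => by rw [hc]; simp [Finset.sum_mul]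
      rw [hIcc, Finset.sum_image (fun x _ y _ h => by omega)] at hswap
      have : ζN * ∑ i ∈ Finset.range t, (c (i + 1) : ℂ) * ζN ^ i = 0 := by
        rw [Finset.mul_sum, ← hswap]
        exact Finset.sum_congr rfl fun i _ => by ring
      exact (mul_eq_zero.1 this).resolve_left (hζN.ne_zero hN.ne')
    -- apply linear independence
    set d := (minpoly K ζN).natDegree with hd
    set G : ℕ → K := fun i => if i < t then c (i + 1) else 0 with hG
    have hsum : ∑ i : Fin d, G (i : ℕ) • ζN ^ (i : ℕ) = 0 := by
      rw [Fin.sum_univ_eq_sum_range (fun i => G i • ζN ^ i) d]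
      have hsub : ∑ i ∈ Finset.range d, G i • ζN ^ i
          = ∑ i ∈ Finset.range t, G i • ζN ^ i := by
        refine (Finset.sum_subset (Finset.range_subset_range.2 hdeg) fun x _ hx => ?_).symm
        rw [Finset.mem_range] at hx
        rw [hG]; simp only [if_neg hx, zero_smul]
      rw [hsub, ← h0]
      refine Finset.sum_congr rfl fun i hi => ?_
      rw [Finset.mem_range] at hi
      rw [hG]
      simp [if_pos hi, Algebra.smul_def]
    have hzero := Fintype.linearIndependent_iff.1 hind (fun i => G (i : ℕ)) hsum
    intro n hn
    rw [Finset.mem_Icc] at hn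
    have hlt : n - 1 < d := lt_of_lt_of_le (by omega) hdeg
    have := hzero ⟨n - 1, hlt⟩
    rw [hG] at this
    simp only [if_pos (show n - 1 < t by omega)] at this
    have hn1 : n - 1 + 1 = n := by omega
    rw [hn1] at this
    have : (c n : ℂ) = 0 := by rw [this]; simp
    rwa [hc] at this
  · intro h
    rw [Finset.sum_comm]
    refine Finset.sum_eq_zero fun n hn => ?_
    rw [← Finset.sum_mul, h n hn, zero_mul]
end

section
/- Let N₁ ≠ N₂ be distinct primes and let X, Y be binary matrices of size N₁ × N₂ (entries in {0,1}). If X̃_{00} = Ỹ_{00}, X̃_{10} = Ỹ_{10}, X̃_{01} = Ỹ_{01}, and X̃_{11} = Ỹ_{11}, then X = Y. -/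
open Polynomial Finset

private theorem pow_mod_eq' {n : ℕ} {ζ : ℂ} (hζ : ζ ^ n = 1) {a b : ℕ} (h : a ≡ b [MOD n]) :
    ζ ^ a = ζ ^ b := by
  have key : ∀ c : ℕ, ζ ^ c = ζ ^ (c % n) := by
    intro c
    conv_lhs => rw [← Nat.div_add_mod c n]
    rw [pow_add, pow_mul, hζ, one_pow, one_mul]
  rw [key a, key b, h]

private theorem geo_sum' {p : ℕ} {ζ : ℂ} (hζ : IsPrimitiveRoot ζ p) (t : ℕ) :
    ∑ j ∈ Finset.range p, (ζ ^ t) ^ j = if p ∣ t then (p : ℂ) else 0 := by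
  by_cases h : p ∣ t
  · have : ζ ^ t = 1 := (hζ.pow_eq_one_iff_dvd t).2 h
    simp [h, this]
  · have hne1 : ζ ^ t ≠ 1 := fun h1 => h ((hζ.pow_eq_one_iff_dvd t).1 h1)
    rw [geom_sum_eq hne1, ← pow_mul, mul_comm, pow_mul, hζ.pow_eq_one, one_pow]
    simp [h]

private theorem prime_root_rel {p : ℕ} (hp : p.Prime) {ζ : ℂ} (hζ : IsPrimitiveRoot ζ p)
    (a : ℕ → ℤ) (h : ∑ n ∈ Finset.range p, (a n : ℂ) * ζ ^ n = 0) :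
    ∀ n < p, a n = a 0 := by
  have hfact : Fact p.Prime := ⟨hp⟩
  set P : ℚ[X] := ∑ n ∈ Finset.range p, C ((a n : ℚ) - (a 0 : ℚ)) * X ^ n with hP
  have hsum : ∑ n ∈ Finset.range p, ζ ^ n = 0 := hζ.geom_sum_eq_zero hp.one_lt
  have haev : aeval ζ P = 0 := by
    rw [hP]
    simp only [map_sum, map_mul, map_pow, aeval_C, aeval_X, map_sub, map_intCast,
      sub_mul, Finset.sum_sub_distrib]
    rw [h, ← Finset.mul_sum, hsum]
    ring
  have hdvd : Polynomial.cyclotomic p ℚ ∣ P := by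
    rw [Polynomial.cyclotomic_eq_minpoly_rat hζ hp.pos]
    exact minpoly.dvd ℚ ζ haev
  have hdegP : P.degree < p := by
    apply lt_of_le_of_lt (Polynomial.degree_sum_le _ _)
    apply Finset.sup_lt_iff (by exact_mod_cast WithBot.bot_lt_coe p) |>.2
    intro n hn
    apply lt_of_le_of_lt (Polynomial.degree_C_mul_X_pow_le _ _)
    exact_mod_cast Finset.mem_range.1 hn
  have hcyc0 : (Polynomial.cyclotomic p ℚ) ≠ 0 := Polynomial.cyclotomic_ne_zero p ℚ
  have hcycdeg : (Polynomial.cyclotomic p ℚ).natDegree = p - 1 := by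
    rw [Polynomial.natDegree_cyclotomic]; exact Nat.totient_prime hp
  have hcycc0 : (Polynomial.cyclotomic p ℚ).coeff 0 = 1 := by
    rw [Polynomial.cyclotomic_prime, Polynomial.finset_sum_coeff]
    simp [Polynomial.coeff_X_pow, Finset.sum_ite_eq, hp.pos]
  have hc0 : P.coeff 0 = 0 := by
    rw [hP, Polynomial.finset_sum_coeff]
    simp only [Polynomial.coeff_C_mul, Polynomial.coeff_X_pow, mul_ite, mul_one, mul_zero]
    rw [Finset.sum_ite_eq (Finset.range p) 0]
    simp [hp.pos]
  have hP0 : P = 0 := by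
    by_contra h0
    obtain ⟨q, hq⟩ := hdvd
    have hq0 : q ≠ 0 := fun hq0 => h0 (by rw [hq, hq0, mul_zero])
    have hnd : P.natDegree = (p - 1) + q.natDegree := by
      rw [hq, Polynomial.natDegree_mul hcyc0 hq0, hcycdeg]
    have hndP : P.natDegree < p := by
      rwa [← Polynomial.natDegree_lt_iff_degree_lt h0] at hdegP
    have hqd : q.natDegree = 0 := by omega
    have hqc : q = C (q.coeff 0) := Polynomial.eq_C_of_natDegree_eq_zero hqd
    have : P.coeff 0 = (Polynomial.cyclotomic p ℚ).coeff 0 * q.coeff 0 := by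
      rw [hq, Polynomial.mul_coeff_zero]
    rw [hc0, hcycc0, one_mul] at this
    exact hq0 (by rw [hqc, ← this, map_zero])
  intro n hn
  have hcn : P.coeff n = 0 := by rw [hP0]; simp
  rw [hP, Polynomial.finset_sum_coeff] at hcn
  simp only [Polynomial.coeff_C_mul, Polynomial.coeff_X_pow, mul_ite, mul_one, mul_zero] at hcn
  rw [Finset.sum_ite_eq (Finset.range p) n] at hcn
  simp [Finset.mem_range.2 hn, sub_eq_zero] at hcn
  exact_mod_cast hcn

private theorem conj_root {n : ℕ} (hn : 0 < n) {ζ : ℂ} (hζ : IsPrimitiveRoot ζ n)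
    (Q : ℚ[X]) (hQ : aeval ζ Q = 0) {j : ℕ} (hj : Nat.Coprime j n) :
    aeval (ζ ^ j) Q = 0 := by
  obtain ⟨q, hq⟩ : minpoly ℚ ζ ∣ Q := minpoly.dvd ℚ ζ hQ
  have hprim : IsPrimitiveRoot (ζ ^ j) n := hζ.pow_of_coprime j hj
  have hroot : aeval (ζ ^ j) (minpoly ℚ ζ) = 0 := by
    rw [← Polynomial.cyclotomic_eq_minpoly_rat hζ hn]
    have := hprim.isRoot_cyclotomic hn
    rw [Polynomial.IsRoot.def, ← Polynomial.map_cyclotomic n (algebraMap ℚ ℂ),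
      Polynomial.eval_map, ← Polynomial.aeval_def] at this
    exact this
  rw [hq, map_mul, hroot, zero_mul]

/-- Two-dimensional DFT coefficient of an `N₁ × N₂` integer matrix. -/
noncomputable def dft (N₁ N₂ : ℕ) (X : ℕ → ℕ → ℤ) (k l : ℤ) : ℂ :=
  ∑ m ∈ Finset.range N₁, ∑ n ∈ Finset.range N₂,
    (X m n : ℂ) *
      Complex.exp (2 * Real.pi * Complex.I *
        ((m : ℂ) * k / N₁ + (n : ℂ) * l / N₂))

/-- For distinct primes `N₁ ≠ N₂`, a binary `N₁ × N₂` matrix is uniquely determined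
by the four DFT coefficients `X̃₀₀, X̃₁₀, X̃₀₁, X̃₁₁`. -/
theorem binary_matrix_unique_from_four_dft_coeffs
    (N₁ N₂ : ℕ) (h1 : N₁.Prime) (h2 : N₂.Prime) (hne : N₁ ≠ N₂)
    (X Y : ℕ → ℕ → ℤ)
    (hX : ∀ m < N₁, ∀ n < N₂, X m n = 0 ∨ X m n = 1)
    (hY : ∀ m < N₁, ∀ n < N₂, Y m n = 0 ∨ Y m n = 1)
    (h00 : dft N₁ N₂ X 0 0 = dft N₁ N₂ Y 0 0)
    (h10 : dft N₁ N₂ X 1 0 = dft N₁ N₂ Y 1 0)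
    (h01 : dft N₁ N₂ X 0 1 = dft N₁ N₂ Y 0 1)
    (h11 : dft N₁ N₂ X 1 1 = dft N₁ N₂ Y 1 1) :
    ∀ m < N₁, ∀ n < N₂, X m n = Y m n := by
  set Z : ℕ → ℕ → ℤ := fun m n => X m n - Y m n with hZdef
  have hN1C : (N₁ : ℂ) ≠ 0 := Nat.cast_ne_zero.2 h1.ne_zero
  have hN2C : (N₂ : ℂ) ≠ 0 := Nat.cast_ne_zero.2 h2.ne_zero
  have hcop : Nat.Coprime N₁ N₂ := (Nat.coprime_primes h1 h2).2 hne
  have hNpos : 0 < N₁ * N₂ := Nat.mul_pos h1.pos h2.pos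
  set ζ : ℂ := Complex.exp (2 * Real.pi * Complex.I / (N₁ * N₂ : ℕ)) with hζdef
  set ζ₁ : ℂ := Complex.exp (2 * Real.pi * Complex.I / N₁) with hζ1def
  set ζ₂ : ℂ := Complex.exp (2 * Real.pi * Complex.I / N₂) with hζ2def
  have hζ : IsPrimitiveRoot ζ (N₁ * N₂) := Complex.isPrimitiveRoot_exp _ hNpos.ne'
  have hζ1 : IsPrimitiveRoot ζ₁ N₁ := Complex.isPrimitiveRoot_exp _ h1.ne_zero
  have hζ2 : IsPrimitiveRoot ζ₂ N₂ := Complex.isPrimitiveRoot_exp _ h2.ne_zero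
  have hz1 : ζ ^ N₂ = ζ₁ := by
    rw [hζdef, hζ1def, ← Complex.exp_nat_mul]
    congr 1
    push_cast
    field_simp
  have hz2 : ζ ^ N₁ = ζ₂ := by
    rw [hζdef, hζ2def, ← Complex.exp_nat_mul]
    congr 1
    push_cast
    field_simp
  -- extract difference relations
  have hD : ∀ k l : ℤ, dft N₁ N₂ X k l = dft N₁ N₂ Y k l →
      ∑ m ∈ Finset.range N₁, ∑ n ∈ Finset.range N₂,
        (Z m n : ℂ) * Complex.exp (2 * Real.pi * Complex.I *
          ((m : ℂ) * k / N₁ + (n : ℂ) * l / N₂)) = 0 := by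
    intro k l h
    have h' : dft N₁ N₂ X k l - dft N₁ N₂ Y k l = 0 := sub_eq_zero.2 h
    rw [dft, dft, ← Finset.sum_sub_distrib] at h'
    simp only [← Finset.sum_sub_distrib, ← sub_mul] at h'
    rw [← h']
    refine Finset.sum_congr rfl fun m _ => Finset.sum_congr rfl fun n _ => ?_
    simp only [hZdef]
    push_cast
    ring
  have h00' : ∑ m ∈ Finset.range N₁, ∑ n ∈ Finset.range N₂, (Z m n : ℂ) = 0 := by
    have h := hD 0 0 h00
    rw [← h]
    refine Finset.sum_congr rfl fun m _ => Finset.sum_congr rfl fun n _ => ?_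
    norm_num
  have h10' : ∑ m ∈ Finset.range N₁, ∑ n ∈ Finset.range N₂, (Z m n : ℂ) * ζ₁ ^ m = 0 := by
    have h := hD 1 0 h10
    rw [← h]
    refine Finset.sum_congr rfl fun m _ => Finset.sum_congr rfl fun n _ => ?_
    rw [hζ1def, ← Complex.exp_nat_mul]
    norm_num
    left
    ring
  have h01' : ∑ m ∈ Finset.range N₁, ∑ n ∈ Finset.range N₂, (Z m n : ℂ) * ζ₂ ^ n = 0 := by
    have h := hD 0 1 h01
    rw [← h]
    refine Finset.sum_congr rfl fun m _ => Finset.sum_congr rfl fun n _ => ?_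
    rw [hζ2def, ← Complex.exp_nat_mul]
    norm_num
    left
    ring
  have h11' : ∑ m ∈ Finset.range N₁, ∑ n ∈ Finset.range N₂,
      (Z m n : ℂ) * (ζ₁ ^ m * ζ₂ ^ n) = 0 := by
    have h := hD 1 1 h11
    rw [← h]
    refine Finset.sum_congr rfl fun m _ => Finset.sum_congr rfl fun n _ => ?_
    rw [hζ1def, hζ2def, ← Complex.exp_nat_mul, ← Complex.exp_nat_mul, ← Complex.exp_add]
    congr 1
    push_cast
    ring
  -- the polynomial
  set Q : ℚ[X] := ∑ m ∈ Finset.range N₁, ∑ n ∈ Finset.range N₂,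
      C ((Z m n : ℚ)) * Polynomial.X ^ (m * N₂ + n * N₁) with hQdef
  have haevQ : ∀ j : ℕ, aeval (ζ ^ j) Q =
      ∑ m ∈ Finset.range N₁, ∑ n ∈ Finset.range N₂,
        (Z m n : ℂ) * (ζ₁ ^ (j * m) * ζ₂ ^ (j * n)) := by
    intro j
    rw [hQdef]
    simp only [map_sum, map_mul, map_pow, aeval_C, aeval_X, map_intCast]
    refine Finset.sum_congr rfl fun m _ => Finset.sum_congr rfl fun n _ => ?_
    congr 1
    rw [← pow_mul]
    have he : j * (m * N₂ + n * N₁) = N₂ * (j * m) + N₁ * (j * n) := by ring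
    rw [he, pow_add, pow_mul ζ N₂, hz1, pow_mul ζ N₁, hz2]
  have hQ0 : aeval ζ Q = 0 := by
    have h := haevQ 1
    rw [pow_one] at h
    rw [h]
    simpa only [one_mul] using h11'
  -- all "row-twisted" relations vanish
  have hT : ∀ j₁ < N₁, ∑ m ∈ Finset.range N₁, ∑ n ∈ Finset.range N₂,
      (Z m n : ℂ) * (ζ₁ ^ (j₁ * m) * ζ₂ ^ n) = 0 := by
    intro j₁ hj₁
    rcases Nat.eq_zero_or_pos j₁ with hj0 | hjpos
    · subst hj0
      simpa only [zero_mul, pow_zero, one_mul] using h01'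
    · obtain ⟨j, hm1, hm2⟩ := Nat.chineseRemainder hcop j₁ 1
      have hjmod1 : j % N₁ = j₁ := by
        rw [Nat.ModEq] at hm1
        rw [hm1, Nat.mod_eq_of_lt hj₁]
      have hjmod2 : j % N₂ = 1 := by
        rw [Nat.ModEq] at hm2
        rw [hm2, Nat.mod_eq_of_lt h2.one_lt]
      have hjN1 : ¬ N₁ ∣ j := by
        rw [Nat.dvd_iff_mod_eq_zero]
        omega
      have hjN2 : ¬ N₂ ∣ j := by
        rw [Nat.dvd_iff_mod_eq_zero]
        omega
      have hc1 : Nat.Coprime j N₁ := Nat.coprime_comm.mp (h1.coprime_iff_not_dvd.2 hjN1)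
      have hc2 : Nat.Coprime j N₂ := Nat.coprime_comm.mp (h2.coprime_iff_not_dvd.2 hjN2)
      have hcj : Nat.Coprime j (N₁ * N₂) := Nat.Coprime.mul_right hc1 hc2
      have h0 : aeval (ζ ^ j) Q = 0 := conj_root hNpos hζ Q hQ0 hcj
      rw [haevQ j] at h0
      rw [← h0]
      refine Finset.sum_congr rfl fun m _ => Finset.sum_congr rfl fun n _ => ?_
      congr 2
      · exact pow_mod_eq' hζ1.pow_eq_one (Nat.ModEq.mul_right m hm1.symm)
      · have := pow_mod_eq' hζ2.pow_eq_one (Nat.ModEq.mul_right n hm2.symm)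
        rw [one_mul] at this
        exact this
  -- each row is constant
  have hrow : ∀ m₀ < N₁, ∀ n < N₂, Z m₀ n = Z m₀ 0 := by
    intro m₀ hm₀
    set c := m₀ * (N₁ - 1) with hc
    have key : ∀ m : ℕ, c + m + m₀ = m₀ * N₁ + m := by
      intro m
      obtain ⟨t, ht⟩ : ∃ t, N₁ = t + 1 := ⟨N₁ - 1, by omega⟩
      rw [hc, ht, Nat.add_sub_cancel]
      ring
    have hdiv : ∀ m < N₁, (N₁ ∣ c + m ↔ m = m₀) := by
      intro m hm
      constructor
      · rintro ⟨k, hk⟩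
        have e2 : m₀ * N₁ + m = N₁ * k + m₀ := by rw [← key, hk]
        have e3 : (m₀ * N₁ + m) % N₁ = m := by
          rw [mul_comm m₀ N₁, Nat.mul_add_mod, Nat.mod_eq_of_lt hm]
        have e4 : (N₁ * k + m₀) % N₁ = m₀ := by
          rw [Nat.mul_add_mod, Nat.mod_eq_of_lt hm₀]
        rw [e2, e4] at e3
        omega
      · rintro rfl
        have e : c + m = m * N₁ := Nat.add_right_cancel (key m)
        exact ⟨m, by rw [e, mul_comm]⟩
    have hstep : ∑ j₁ ∈ Finset.range N₁, ζ₁ ^ (j₁ * c) *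
        (∑ m ∈ Finset.range N₁, ∑ n ∈ Finset.range N₂,
          (Z m n : ℂ) * (ζ₁ ^ (j₁ * m) * ζ₂ ^ n)) =
        ∑ m ∈ Finset.range N₁, ∑ n ∈ Finset.range N₂,
          (Z m n : ℂ) * ζ₂ ^ n * (if N₁ ∣ c + m then (N₁ : ℂ) else 0) := by
      calc ∑ j₁ ∈ Finset.range N₁, ζ₁ ^ (j₁ * c) *
            (∑ m ∈ Finset.range N₁, ∑ n ∈ Finset.range N₂,
              (Z m n : ℂ) * (ζ₁ ^ (j₁ * m) * ζ₂ ^ n))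
          = ∑ j₁ ∈ Finset.range N₁, ∑ m ∈ Finset.range N₁, ∑ n ∈ Finset.range N₂,
              (Z m n : ℂ) * ζ₂ ^ n * (ζ₁ ^ (c + m)) ^ j₁ := by
            refine Finset.sum_congr rfl fun j₁ _ => ?_
            rw [Finset.mul_sum]
            refine Finset.sum_congr rfl fun m _ => ?_
            rw [Finset.mul_sum]
            refine Finset.sum_congr rfl fun n _ => ?_
            have hpw : (ζ₁ ^ (c + m)) ^ j₁ = ζ₁ ^ (j₁ * c) * ζ₁ ^ (j₁ * m) := by
              rw [← pow_mul, ← pow_add]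
              congr 1
              ring
            rw [hpw]
            ring
        _ = ∑ m ∈ Finset.range N₁, ∑ n ∈ Finset.range N₂,
              ∑ j₁ ∈ Finset.range N₁, (Z m n : ℂ) * ζ₂ ^ n * (ζ₁ ^ (c + m)) ^ j₁ := by
            rw [Finset.sum_comm]
            exact Finset.sum_congr rfl fun m _ => Finset.sum_comm
        _ = ∑ m ∈ Finset.range N₁, ∑ n ∈ Finset.range N₂,
              (Z m n : ℂ) * ζ₂ ^ n * (if N₁ ∣ c + m then (N₁ : ℂ) else 0) := by
            refine Finset.sum_congr rfl fun m _ => Finset.sum_congr rfl fun n _ => ?_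
            rw [← Finset.mul_sum, geo_sum' hζ1]
    have hzero : ∑ j₁ ∈ Finset.range N₁, ζ₁ ^ (j₁ * c) *
        (∑ m ∈ Finset.range N₁, ∑ n ∈ Finset.range N₂,
          (Z m n : ℂ) * (ζ₁ ^ (j₁ * m) * ζ₂ ^ n)) = 0 :=
      Finset.sum_eq_zero fun j₁ hj => by
        rw [hT j₁ (Finset.mem_range.1 hj), mul_zero]
    rw [hstep] at hzero
    rw [Finset.sum_eq_single_of_mem m₀ (Finset.mem_range.2 hm₀)
      (fun m hm hne' => ?_)] at hzero
    swap
    · apply Finset.sum_eq_zero fun n _ => ?_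
      rw [if_neg (fun hd => hne' ((hdiv m (Finset.mem_range.1 hm)).1 hd)), mul_zero]
    have hS : ∑ n ∈ Finset.range N₂, (Z m₀ n : ℂ) * ζ₂ ^ n = 0 := by
      have : (∑ n ∈ Finset.range N₂, (Z m₀ n : ℂ) * ζ₂ ^ n) * (N₁ : ℂ) = 0 := by
        rw [Finset.sum_mul, ← hzero]
        refine Finset.sum_congr rfl fun n _ => ?_
        rw [if_pos ((hdiv m₀ hm₀).2 rfl)]
      exact (mul_eq_zero.1 this).resolve_right hN1C
    exact prime_root_rel h2 hζ2 (fun n => Z m₀ n) hS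
  -- all rows are equal
  have hrow0 : ∀ m < N₁, Z m 0 = Z 0 0 := by
    have hsum10 : ∑ m ∈ Finset.range N₁, ((N₂ * Z m 0 : ℤ) : ℂ) * ζ₁ ^ m = 0 := by
      rw [← h10']
      refine Finset.sum_congr rfl fun m hm => ?_
      rw [← Finset.sum_mul]
      congr 1
      have hcn : ∀ n ∈ Finset.range N₂, (Z m n : ℂ) = (Z m 0 : ℂ) := fun n hn => by
        rw [hrow m (Finset.mem_range.1 hm) n (Finset.mem_range.1 hn)]
      rw [Finset.sum_congr rfl hcn, Finset.sum_const, Finset.card_range]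
      push_cast
      rw [nsmul_eq_mul]
    have hpr := prime_root_rel h1 hζ1 (fun m => N₂ * Z m 0) hsum10
    intro m hm
    have h' := hpr m hm
    exact mul_left_cancel₀ (by exact_mod_cast h2.ne_zero : (N₂ : ℤ) ≠ 0) h'
  -- total sum is zero
  have hsumZ : (∑ m ∈ Finset.range N₁, ∑ n ∈ Finset.range N₂, Z m n) = 0 := by
    have hcast : ((∑ m ∈ Finset.range N₁, ∑ n ∈ Finset.range N₂, Z m n : ℤ) : ℂ) = 0 := by
      push_cast
      exact h00'
    exact_mod_cast hcast
  have hz00 : Z 0 0 = 0 := by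
    have he : ∑ m ∈ Finset.range N₁, ∑ n ∈ Finset.range N₂, Z m n
        = (N₁ * N₂ : ℤ) * Z 0 0 := by
      have : ∀ m ∈ Finset.range N₁, ∑ n ∈ Finset.range N₂, Z m n = N₂ * Z 0 0 := by
        intro m hm
        have hcn : ∀ n ∈ Finset.range N₂, Z m n = Z 0 0 := fun n hn => by
          rw [hrow m (Finset.mem_range.1 hm) n (Finset.mem_range.1 hn),
            hrow0 m (Finset.mem_range.1 hm)]
        rw [Finset.sum_congr rfl hcn, Finset.sum_const, Finset.card_range, nsmul_eq_mul]
      rw [Finset.sum_congr rfl this, Finset.sum_const, Finset.card_range, nsmul_eq_mul]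
      push_cast
      ring
    rw [he] at hsumZ
    have hNZ : (N₁ * N₂ : ℤ) ≠ 0 := by exact_mod_cast hNpos.ne'
    exact (mul_eq_zero.1 hsumZ).resolve_left hNZ
  intro m hm n hn
  have hfin : Z m n = 0 := by rw [hrow m hm n hn, hrow0 m hm, hz00]
  simp only [hZdef] at hfin
  omega
end

section
/- Let N be prime. Define a relation on pairs (k,l) of residues modulo N by (k,l) ~ (k',l') iff k l' ≡ k' l (mod N). Then for two binary N × N matrices X and Y with the same global popcount, if (k,l) ~ (k',l') with (k',l') not both ≡ 0 mod N, and X̃_{k'l'} = Ỹ_{k'l'}, then X̃_{kl} = Ỹ_{kl}. -/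
open Finset Complex

section aux

lemma aux_zpow_eq_of_dvd_sub {N : ℕ} (ω : ℂ) (hω0 : ω ≠ 0) (hωN : ω ^ (N : ℤ) = 1)
    {a b : ℤ} (h : (N : ℤ) ∣ a - b) : ω ^ a = ω ^ b := by
  obtain ⟨s, hs⟩ := h
  have ha : a = b + (N : ℤ) * s := by linarith
  rw [ha, zpow_add₀ hω0, zpow_mul, hωN, one_zpow, mul_one]

lemma aux_dft_eq_sum_zpow (N : ℕ) (Z : ℕ → ℕ → ℤ) (a b : ℤ) :
    dft N N Z a b = ∑ m ∈ Finset.range N, ∑ n ∈ Finset.range N,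
      (Z m n : ℂ) * Complex.exp (2 * Real.pi * Complex.I / N) ^ ((m : ℤ) * a + (n : ℤ) * b) := by
  unfold dft
  refine Finset.sum_congr rfl fun m _ => Finset.sum_congr rfl fun n _ => ?_
  rw [← Complex.exp_int_mul]
  congr 2
  push_cast
  ring

lemma aux_fiber_sum (N : ℕ) (F : ℕ → ℕ → ℤ) (key : ℕ → ℕ → ZMod N) (h : ZMod N → ℂ)
    [NeZero N] :
    ∑ j : ZMod N, ((∑ m ∈ Finset.range N, ∑ n ∈ Finset.range N,
        if key m n = j then F m n else 0 : ℤ) : ℂ) * h j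
      = ∑ m ∈ Finset.range N, ∑ n ∈ Finset.range N, (F m n : ℂ) * h (key m n) := by
  have step : ∀ j : ZMod N, ((∑ m ∈ Finset.range N, ∑ n ∈ Finset.range N,
      if key m n = j then F m n else 0 : ℤ) : ℂ) * h j
      = ∑ m ∈ Finset.range N, ∑ n ∈ Finset.range N,
          if key m n = j then (F m n : ℂ) * h j else 0 := by
    intro j
    rw [Int.cast_sum, Finset.sum_mul]
    refine Finset.sum_congr rfl fun m _ => ?_
    rw [Int.cast_sum, Finset.sum_mul]
    refine Finset.sum_congr rfl fun n _ => ?_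
    split <;> simp
  rw [Finset.sum_congr rfl (fun j _ => step j), Finset.sum_comm]
  refine Finset.sum_congr rfl fun m _ => ?_
  rw [Finset.sum_comm]
  refine Finset.sum_congr rfl fun n _ => ?_
  rw [Finset.sum_ite_eq Finset.univ (key m n) (fun j => (F m n : ℂ) * h j),
    if_pos (Finset.mem_univ _)]

lemma aux_sum_univ_zmod {N : ℕ} [NeZero N] {M : Type*} [AddCommMonoid M] (G : ZMod N → M) :
    ∑ j : ZMod N, G j = ∑ i ∈ Finset.range N, G (i : ZMod N) := by
  refine Finset.sum_bij' (fun (j : ZMod N) _ => j.val) (fun i _ => (i : ZMod N))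
    (fun j _ => Finset.mem_range.mpr (ZMod.val_lt j))
    (fun i _ => Finset.mem_univ _)
    (fun j _ => by simp [ZMod.natCast_val, ZMod.cast_id])
    (fun i hi => ZMod.val_cast_of_lt (Finset.mem_range.mp hi))
    (fun j _ => by simp [ZMod.natCast_val, ZMod.cast_id])

open Polynomial in
lemma aux_key_alg (N : ℕ) (hN : N.Prime) (ω : ℂ) (hω : IsPrimitiveRoot ω N)
    (e : ℕ → ℤ) (h0 : ∑ i ∈ Finset.range N, e i = 0)
    (h1 : ∑ i ∈ Finset.range N, (e i : ℂ) * ω ^ i = 0) :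
    ∀ i < N, e i = 0 := by
  have hNpos : 0 < N := hN.pos
  set c : ℤ := e (N - 1) with hc
  set q : ℚ[X] := ∑ i ∈ Finset.range N, C ((e i - c : ℤ) : ℚ) * X ^ i with hq
  have hcoeff : ∀ j, q.coeff j = if j < N then ((e j - c : ℤ) : ℚ) else 0 := by
    intro j
    rw [hq, finset_sum_coeff]
    simp only [coeff_C_mul, coeff_X_pow, mul_ite, mul_one, mul_zero]
    by_cases hj : j < N
    · rw [Finset.sum_eq_single j (fun b _ hb => by
        rw [if_neg (fun hbj => hb hbj.symm)])
        (fun hnot => absurd (Finset.mem_range.mpr hj) hnot), if_pos rfl, if_pos hj]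
    · rw [if_neg hj, Finset.sum_eq_zero]
      intro b hb
      rw [if_neg (by have := Finset.mem_range.mp hb; omega)]
  have hq0 : Polynomial.aeval ω q = 0 := by
    rw [hq, map_sum]
    have : ∀ i ∈ Finset.range N,
        Polynomial.aeval ω (C ((e i - c : ℤ) : ℚ) * X ^ i)
          = ((e i : ℂ) - (c : ℂ)) * ω ^ i := by
      intro i _
      simp only [map_mul, map_pow, Polynomial.aeval_C, Polynomial.aeval_X]
      norm_cast
    rw [Finset.sum_congr rfl this]
    have hgeom : ∑ i ∈ Finset.range N, ω ^ i = 0 :=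
      hω.geom_sum_eq_zero hN.one_lt
    calc ∑ i ∈ Finset.range N, ((e i : ℂ) - (c : ℂ)) * ω ^ i
        = (∑ i ∈ Finset.range N, (e i : ℂ) * ω ^ i)
          - (c : ℂ) * ∑ i ∈ Finset.range N, ω ^ i := by
          rw [Finset.mul_sum, ← Finset.sum_sub_distrib]; exact Finset.sum_congr rfl fun i _ => by ring
      _ = 0 := by rw [h1, hgeom]; ring
  have hmin : minpoly ℚ ω = cyclotomic N ℚ := (cyclotomic_eq_minpoly_rat hω hNpos).symm
  have hdeg_min : (minpoly ℚ ω).natDegree = N - 1 := by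
    rw [hmin, natDegree_cyclotomic, Nat.totient_prime hN]
  have hdvd := minpoly.dvd ℚ ω hq0
  have hqz : q = 0 := by
    by_contra hne
    have hle := Polynomial.natDegree_le_of_dvd hdvd hne
    have hlead := Polynomial.leadingCoeff_ne_zero.mpr hne
    have hd1 : q.natDegree < N := by
      by_contra hge
      apply hlead
      rw [Polynomial.leadingCoeff, hcoeff, if_neg (by omega)]
    have hd2 : q.natDegree ≠ N - 1 := by
      intro hEq
      apply hlead
      rw [Polynomial.leadingCoeff, hEq, hcoeff, if_pos (by omega), hc]
      simp
    omega
  have hec : ∀ i < N, e i = c := by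
    intro i hi
    have := hcoeff i
    rw [hqz, Polynomial.coeff_zero, if_pos hi] at this
    exact_mod_cast sub_eq_zero.mp (by exact_mod_cast this.symm)
  have hsum : (N : ℤ) * c = 0 := by
    rw [← h0, Finset.sum_congr rfl (fun i hi => hec i (Finset.mem_range.mp hi))]
    simp [mul_comm]
  have hc0 : c = 0 := by
    rcases mul_eq_zero.mp hsum with hz | hz
    · exact absurd (by exact_mod_cast hz) hN.ne_zero
    · exact hz
  intro i hi
  rw [hec i hi, hc0]

end aux

/-- For prime `N` and binary `N × N` matrices with the same global popcount,
slope-equivalent DFT coefficients carry the same information: if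
`k l' ≡ k' l (mod N)` with `(k', l')` not both `≡ 0 (mod N)` and the matrices agree
at `(k', l')`, then they also agree at `(k, l)`. -/
theorem slope_equivalent_dft_coeffs_determine
    (N : ℕ) (hN : N.Prime) (X Y : ℕ → ℕ → ℤ)
    (hX : ∀ m < N, ∀ n < N, X m n = 0 ∨ X m n = 1)
    (hY : ∀ m < N, ∀ n < N, Y m n = 0 ∨ Y m n = 1)
    (hpop : dft N N X 0 0 = dft N N Y 0 0)
    (k l k' l' : ℤ)
    (hrel : (N : ℤ) ∣ (k * l' - k' * l))
    (hnz : ¬((N : ℤ) ∣ k' ∧ (N : ℤ) ∣ l'))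
    (h : dft N N X k' l' = dft N N Y k' l') :
    dft N N X k l = dft N N Y k l := by
  have hN0 : N ≠ 0 := hN.ne_zero
  haveI : NeZero N := ⟨hN0⟩
  haveI : Fact N.Prime := ⟨hN⟩
  set ω : ℂ := Complex.exp (2 * Real.pi * Complex.I / N) with hωdef
  have hω : IsPrimitiveRoot ω N := Complex.isPrimitiveRoot_exp N hN0
  have hω0 : ω ≠ 0 := Complex.exp_ne_zero _
  have hωN : ω ^ (N : ℤ) = 1 := by exact_mod_cast hω.pow_eq_one
  -- slope scaling factor
  obtain ⟨τ, hτk, hτl⟩ : ∃ τ : ZMod N, (k : ZMod N) = τ * (k' : ℤ) ∧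
      (l : ZMod N) = τ * (l' : ℤ) := by
    have hrel' : (k : ZMod N) * (l' : ℤ) = (k' : ZMod N) * (l : ℤ) := by
      have h0 := (ZMod.intCast_zmod_eq_zero_iff_dvd _ N).mpr hrel
      push_cast at h0
      linear_combination h0
    by_cases hk' : ((k' : ℤ) : ZMod N) = 0
    · have hl' : ((l' : ℤ) : ZMod N) ≠ 0 := fun h0 =>
        hnz ⟨(ZMod.intCast_zmod_eq_zero_iff_dvd _ N).mp hk',
          (ZMod.intCast_zmod_eq_zero_iff_dvd _ N).mp h0⟩
      refine ⟨(l : ZMod N) * ((l' : ℤ) : ZMod N)⁻¹, ?_, ?_⟩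
      · rw [hk', mul_zero]
        have hz : (k : ZMod N) * (l' : ℤ) = 0 := by rw [hrel', hk', zero_mul]
        exact (mul_eq_zero.mp hz).resolve_right hl'
      · field_simp
    · refine ⟨(k : ZMod N) * ((k' : ℤ) : ZMod N)⁻¹, ?_, ?_⟩
      · field_simp
      · field_simp
        linear_combination -hrel'
  set t : ℤ := (τ.val : ℤ) with ht
  have htZ : ((t : ℤ) : ZMod N) = τ := by
    rw [ht]
    push_cast
    simp [ZMod.natCast_val, ZMod.cast_id]
  have hkt : (N : ℤ) ∣ k - t * k' := by
    rw [← ZMod.intCast_zmod_eq_zero_iff_dvd]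
    push_cast
    rw [htZ, ← hτk, sub_self]
  have hlt : (N : ℤ) ∣ l - t * l' := by
    rw [← ZMod.intCast_zmod_eq_zero_iff_dvd]
    push_cast
    rw [htZ, ← hτl, sub_self]
  set key : ℕ → ℕ → ZMod N :=
    fun m n => (((m : ℤ) * k' + (n : ℤ) * l' : ℤ) : ZMod N) with hkeydef
  set F : ℕ → ℕ → ℤ := fun m n => X m n - Y m n with hFdef
  set d : ZMod N → ℤ := fun j => ∑ m ∈ Finset.range N, ∑ n ∈ Finset.range N,
    if key m n = j then F m n else 0 with hddef
  -- dft differences as sums of integer powers of ω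
  have hdiff : ∀ a b : ℤ, dft N N X a b - dft N N Y a b
      = ∑ m ∈ Finset.range N, ∑ n ∈ Finset.range N,
          (F m n : ℂ) * ω ^ ((m : ℤ) * a + (n : ℤ) * b) := by
    intro a b
    rw [aux_dft_eq_sum_zpow, aux_dft_eq_sum_zpow, ← Finset.sum_sub_distrib]
    refine Finset.sum_congr rfl fun m _ => ?_
    rw [← Finset.sum_sub_distrib]
    refine Finset.sum_congr rfl fun n _ => ?_
    simp only [hFdef, ← hωdef]
    push_cast
    ring
  -- global popcount
  have h00 : ∀ Z : ℕ → ℕ → ℤ, dft N N Z 0 0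
      = ∑ m ∈ Finset.range N, ∑ n ∈ Finset.range N, (Z m n : ℂ) := by
    intro Z
    unfold dft
    simp
  have hFsum : ∑ m ∈ Finset.range N, ∑ n ∈ Finset.range N, (F m n : ℂ) = 0 := by
    have hsplit : ∑ m ∈ Finset.range N, ∑ n ∈ Finset.range N, (F m n : ℂ)
        = (∑ m ∈ Finset.range N, ∑ n ∈ Finset.range N, (X m n : ℂ))
          - ∑ m ∈ Finset.range N, ∑ n ∈ Finset.range N, (Y m n : ℂ) := by
      rw [← Finset.sum_sub_distrib]
      refine Finset.sum_congr rfl fun m _ => ?_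
      rw [← Finset.sum_sub_distrib]
      refine Finset.sum_congr rfl fun n _ => ?_
      simp only [hFdef]
      push_cast
      ring
    rw [hsplit, ← h00 X, ← h00 Y, hpop, sub_self]
  -- coefficient sums vanish
  have hdZ : ∑ j : ZMod N, d j = 0 := by
    have hfib : ∑ j : ZMod N, (d j : ℂ) * (fun _ : ZMod N => (1 : ℂ)) j
        = ∑ m ∈ Finset.range N, ∑ n ∈ Finset.range N,
            (F m n : ℂ) * (fun _ : ZMod N => (1 : ℂ)) (key m n) :=
      aux_fiber_sum N F key (fun _ => 1)
    simp only [mul_one] at hfib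
    have hcast : ((∑ j : ZMod N, d j : ℤ) : ℂ) = 0 := by
      push_cast
      rw [hfib, hFsum]
    exact_mod_cast hcast
  have he0 : ∑ i ∈ Finset.range N, d (i : ZMod N) = 0 := by
    rw [← aux_sum_univ_zmod (fun j : ZMod N => d j)]
    exact hdZ
  have hvalkey : ∀ m n : ℕ, ((((key m n).val : ℕ) : ℤ) : ZMod N) = key m n := by
    intro m n
    push_cast
    rw [ZMod.natCast_val, ZMod.cast_id]
  have h1C : ∑ i ∈ Finset.range N, (d (i : ZMod N) : ℂ) * ω ^ i = 0 := by
    have hfib : ∑ j : ZMod N, (d j : ℂ) * (fun j : ZMod N => ω ^ j.val) j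
        = ∑ m ∈ Finset.range N, ∑ n ∈ Finset.range N,
            (F m n : ℂ) * (fun j : ZMod N => ω ^ j.val) (key m n) :=
      aux_fiber_sum N F key (fun j => ω ^ j.val)
    simp only at hfib
    have hval : ∀ m n : ℕ, ω ^ ((key m n).val)
        = ω ^ ((m : ℤ) * k' + (n : ℤ) * l') := by
      intro m n
      rw [← zpow_natCast]
      apply aux_zpow_eq_of_dvd_sub ω hω0 hωN
      rw [← ZMod.intCast_zmod_eq_zero_iff_dvd]
      push_cast
      rw [ZMod.natCast_val, ZMod.cast_id]
      rw [show key m n = (((m : ℤ) * k' + (n : ℤ) * l' : ℤ) : ZMod N) from rfl]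
      push_cast
      ring
    calc ∑ i ∈ Finset.range N, (d (i : ZMod N) : ℂ) * ω ^ i
        = ∑ j : ZMod N, (d j : ℂ) * ω ^ j.val := by
          rw [aux_sum_univ_zmod (fun j : ZMod N => (d j : ℂ) * ω ^ j.val)]
          refine Finset.sum_congr rfl fun i hi => ?_
          rw [ZMod.val_cast_of_lt (Finset.mem_range.mp hi)]
      _ = ∑ m ∈ Finset.range N, ∑ n ∈ Finset.range N,
            (F m n : ℂ) * ω ^ ((key m n).val) := hfib
      _ = ∑ m ∈ Finset.range N, ∑ n ∈ Finset.range N,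
            (F m n : ℂ) * ω ^ ((m : ℤ) * k' + (n : ℤ) * l') :=
          Finset.sum_congr rfl fun m _ => Finset.sum_congr rfl fun n _ => by
            rw [hval m n]
      _ = dft N N X k' l' - dft N N Y k' l' := (hdiff k' l').symm
      _ = 0 := by rw [h, sub_self]
  have hdzero : ∀ j : ZMod N, d j = 0 := by
    intro j
    have hz := aux_key_alg N hN ω hω (fun i => d (i : ZMod N)) he0 h1C j.val (ZMod.val_lt j)
    simpa [ZMod.natCast_val, ZMod.cast_id] using hz
  -- conclude at (k, l)
  have hfinal : dft N N X k l - dft N N Y k l = 0 := by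
    rw [hdiff k l]
    have hcong : ∀ m n : ℕ, ω ^ ((m : ℤ) * k + (n : ℤ) * l)
        = ω ^ (t * ((key m n).val : ℤ)) := by
      intro m n
      apply aux_zpow_eq_of_dvd_sub ω hω0 hωN
      rw [← ZMod.intCast_zmod_eq_zero_iff_dvd]
      push_cast
      rw [ZMod.natCast_val, ZMod.cast_id, htZ, hτk, hτl]
      rw [show key m n = (((m : ℤ) * k' + (n : ℤ) * l' : ℤ) : ZMod N) from rfl]
      push_cast
      ring
    rw [Finset.sum_congr rfl (fun m _ => Finset.sum_congr rfl fun n _ => by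
      rw [hcong m n])]
    have hfib : ∑ j : ZMod N, (d j : ℂ) * (fun j : ZMod N => ω ^ (t * (j.val : ℤ))) j
        = ∑ m ∈ Finset.range N, ∑ n ∈ Finset.range N,
            (F m n : ℂ) * (fun j : ZMod N => ω ^ (t * (j.val : ℤ))) (key m n) :=
      aux_fiber_sum N F key (fun j => ω ^ (t * (j.val : ℤ)))
    simp only at hfib
    rw [← hfib]
    refine Finset.sum_eq_zero fun j _ => ?_
    rw [hdzero j]
    simp
  exact sub_eq_zero.mp hfinal
end

section
/- Let N be prime, L₀ = ⌊√N⌋, and L ≥ L₀. If two binary N × N matrices X and Y satisfy X̃_{kl} = Ỹ_{kl} for all |k|, |l| ≤ L, then X = Y. -/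
open Finset Polynomial

noncomputable def zet (N : ℕ) : ℂ := Complex.exp (2 * Real.pi * Complex.I / N)

lemma zet_ne_zero (N : ℕ) : zet N ≠ 0 := Complex.exp_ne_zero _

lemma zet_prim {N : ℕ} (hN : N ≠ 0) : IsPrimitiveRoot (zet N) N :=
  Complex.isPrimitiveRoot_exp N hN

lemma zet_zpow_congr {N : ℕ} (hN : N ≠ 0) {a b : ℤ} (h : (N : ℤ) ∣ a - b) :
    zet N ^ a = zet N ^ b := by
  obtain ⟨c, hc⟩ := h
  have ha : a = b + N * c := by linarith
  have hzN : zet N ^ (N : ℤ) = 1 := by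
    rw [zpow_natCast]; exact (zet_prim hN).pow_eq_one
  rw [ha, zpow_add₀ (zet_ne_zero N), zpow_mul, hzN, one_zpow, mul_one]

lemma dft_eq (N : ℕ) (hN : N ≠ 0) (X : ℕ → ℕ → ℤ) (k l : ℤ) :
    dft N N X k l = ∑ m ∈ range N, ∑ n ∈ range N,
      (X m n : ℂ) * zet N ^ ((m : ℤ) * k + (n : ℤ) * l) := by
  unfold dft zet
  refine sum_congr rfl fun m hm => sum_congr rfl fun n hn => ?_
  congr 1
  rw [← Complex.exp_int_mul]
  congr 1
  have hN0 : (N : ℂ) ≠ 0 := Nat.cast_ne_zero.mpr hN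
  push_cast
  field_simp
lemma coeffs_const {N : ℕ} (hN : N.Prime) (c : ℕ → ℚ)
    (h : ∑ u ∈ range N, (c u : ℂ) * zet N ^ u = 0) :
    ∀ u < N, c u = c 0 := by
  haveI : Fact N.Prime := ⟨hN⟩
  have hNpos : 0 < N := hN.pos
  have hprim := zet_prim (N := N) hN.ne_zero
  have hzN : zet N ^ N = 1 := hprim.pow_eq_one
  have hz1 : zet N ≠ 1 := hprim.ne_one hN.one_lt
  have hgeom : ∑ u ∈ range N, zet N ^ u = 0 := by
    rw [geom_sum_eq hz1, hzN]; simp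
  set f : ℚ[X] := ∑ u ∈ range N, monomial u (c u - c 0) with hf
  have hcoeff : ∀ j < N, f.coeff j = c j - c 0 := by
    intro j hj
    rw [hf, finset_sum_coeff]
    simp only [coeff_monomial]
    rw [Finset.sum_ite_eq' (range N) j (fun u => c u - c 0)]
    simp [hj]
  have hfe : aeval (zet N) f = 0 := by
    rw [hf, map_sum]
    simp only [aeval_monomial]
    have : ∀ u ∈ range N, (algebraMap ℚ ℂ) (c u - c 0) * zet N ^ u
        = (c u : ℂ) * zet N ^ u - (c 0 : ℂ) * zet N ^ u := by
      intro u hu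
      rw [eq_ratCast (algebraMap ℚ ℂ), Rat.cast_sub, sub_mul]
    rw [Finset.sum_congr rfl this, Finset.sum_sub_distrib, h, ← Finset.mul_sum, hgeom]
    ring
  have hdvd : minpoly ℚ (zet N) ∣ f := minpoly.dvd ℚ (zet N) hfe
  rw [← cyclotomic_eq_minpoly_rat hprim hNpos] at hdvd
  have hf0 : f = 0 := by
    by_contra hfne
    obtain ⟨q, hq⟩ := hdvd
    have hcyc_ne : cyclotomic N ℚ ≠ 0 := cyclotomic_ne_zero N ℚ
    have hq_ne : q ≠ 0 := by
      intro h0; rw [h0, mul_zero] at hq; exact hfne hq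
    have hdegf : f.natDegree ≤ N - 1 := by
      rw [hf]
      refine natDegree_sum_le_of_forall_le _ _ fun u hu => ?_
      refine le_trans (natDegree_monomial_le _) ?_
      have := Finset.mem_range.mp hu
      omega
    have hdegcyc : (cyclotomic N ℚ).natDegree = N - 1 := by
      rw [natDegree_cyclotomic, Nat.totient_prime hN]
    have hdmul : f.natDegree = (cyclotomic N ℚ).natDegree + q.natDegree := by
      rw [hq, natDegree_mul hcyc_ne hq_ne]
    have hqdeg : q.natDegree = 0 := by omega
    obtain ⟨a, ha⟩ := natDegree_eq_zero.mp hqdeg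
    have hc0 : (cyclotomic N ℚ).coeff 0 = 1 := by
      rw [cyclotomic_prime ℚ N, finset_sum_coeff]
      simp only [coeff_X_pow]
      rw [Finset.sum_ite_eq (range N) 0 (fun _ => (1:ℚ))]
      simp [hNpos]
    have hfc0 : f.coeff 0 = 0 := by
      rw [hcoeff 0 hNpos]; ring
    rw [hq, ← ha, coeff_mul_C, hc0, one_mul] at hfc0
    rw [hq, ← ha, hfc0, map_zero, mul_zero] at hfne
    exact hfne rfl
  intro u hu
  have := hcoeff u hu
  rw [hf0, coeff_zero] at this
  linarith [this.symm]
def eaux (a b : ℤ) (p : ℕ × ℕ) : ℤ := (p.1:ℤ)*a+(p.2:ℤ)*b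

def raux (N : ℕ) (a b : ℤ) (p : ℕ × ℕ) : ℕ := (eaux a b p % N).toNat

def Paux (N : ℕ) (Z : ℕ → ℕ → ℤ) (a b : ℤ) (u : ℕ) : ℤ :=
  ∑ p ∈ (range N ×ˢ range N).filter (fun p => raux N a b p = u), Z p.1 p.2

lemma line_kill {N : ℕ} (hN : N.Prime) (Z : ℕ → ℕ → ℤ) (a b : ℤ)
    (h1 : ∑ m ∈ range N, ∑ n ∈ range N,
        (Z m n : ℂ) * zet N ^ ((m:ℤ)*a+(n:ℤ)*b) = 0)
    (h0 : ∑ m ∈ range N, ∑ n ∈ range N, Z m n = 0) (t : ℤ) :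
    ∑ m ∈ range N, ∑ n ∈ range N,
        (Z m n : ℂ) * zet N ^ (t*((m:ℤ)*a+(n:ℤ)*b)) = 0 := by
  have hN0 : N ≠ 0 := hN.ne_zero
  have hNz : (N:ℤ) ≠ 0 := by exact_mod_cast hN0
  have hNpos : (0:ℤ) < N := by exact_mod_cast hN.pos
  have hrlt : ∀ p : ℕ × ℕ, raux N a b p ∈ range N := by
    intro p
    rw [Finset.mem_range, raux]
    have h1' := Int.emod_nonneg (eaux a b p) hNz
    have h2' := Int.emod_lt_of_pos (eaux a b p) hNpos
    omega
  have hcong : ∀ p : ℕ × ℕ, (N:ℤ) ∣ eaux a b p - (raux N a b p : ℤ) := by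
    intro p
    have h1' := Int.emod_nonneg (eaux a b p) hNz
    refine ⟨eaux a b p / N, ?_⟩
    have hh : ((raux N a b p : ℤ)) = eaux a b p % N := by
      rw [raux]; exact Int.toNat_of_nonneg h1'
    rw [hh, Int.emod_def]
    ring
  have hgroupC : ∀ s : ℤ, (∑ p ∈ range N ×ˢ range N,
      (Z p.1 p.2 : ℂ) * zet N ^ (s * eaux a b p))
      = ∑ u ∈ range N, (Paux N Z a b u : ℂ) * zet N ^ (s * (u:ℤ)) := by
    intro s
    rw [← Finset.sum_fiberwise_of_maps_to (fun p _ => hrlt p)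
      (fun p => (Z p.1 p.2 : ℂ) * zet N ^ (s * eaux a b p))]
    refine sum_congr rfl fun u hu => ?_
    have hterm : ∀ p ∈ (range N ×ˢ range N).filter (fun p => raux N a b p = u),
        (Z p.1 p.2 : ℂ) * zet N ^ (s * eaux a b p)
        = (Z p.1 p.2 : ℂ) * zet N ^ (s * (u:ℤ)) := by
      intro p hp
      have hpu : raux N a b p = u := by
        simpa using (Finset.mem_filter.mp hp).2
      congr 1
      apply zet_zpow_congr hN0
      have heq : s * eaux a b p - s * (u:ℤ)
          = s * (eaux a b p - (raux N a b p : ℤ)) := by rw [hpu]; ring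
      rw [heq]
      exact Dvd.dvd.mul_left (hcong p) s
    rw [Finset.sum_congr rfl hterm, ← Finset.sum_mul]
    congr 1
    rw [Paux]
    push_cast
    rfl
  have hgroupZ : ∑ u ∈ range N, Paux N Z a b u = 0 := by
    calc ∑ u ∈ range N, Paux N Z a b u
        = ∑ p ∈ range N ×ˢ range N, Z p.1 p.2 :=
          Finset.sum_fiberwise_of_maps_to (fun p _ => hrlt p) _
      _ = 0 := by rw [Finset.sum_product]; exact h0
  have h1p : ∑ p ∈ range N ×ˢ range N,
      (Z p.1 p.2 : ℂ) * zet N ^ ((1:ℤ) * eaux a b p) = 0 := by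
    rw [Finset.sum_product]
    simp only [one_mul, eaux]
    exact h1
  have h1' : ∑ u ∈ range N, (((Paux N Z a b u : ℚ)) : ℂ) * zet N ^ u = 0 := by
    rw [hgroupC 1] at h1p
    rw [← h1p]
    refine sum_congr rfl fun u hu => ?_
    rw [one_mul, zpow_natCast]
    push_cast
    ring
  have hPconst := coeffs_const hN (fun u => (Paux N Z a b u : ℚ)) h1'
  have hPc : ∀ u < N, Paux N Z a b u = Paux N Z a b 0 := by
    intro u hu
    have hc : ((Paux N Z a b u : ℚ)) = ((Paux N Z a b 0 : ℚ)) := hPconst u hu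
    exact_mod_cast hc
  have hP00 : Paux N Z a b 0 = 0 := by
    have hsum : ∑ u ∈ range N, Paux N Z a b u
        = ∑ u ∈ range N, Paux N Z a b 0 := by
      refine sum_congr rfl fun u hu => ?_
      exact hPc u (mem_range.mp hu)
    rw [hgroupZ, Finset.sum_const, card_range, nsmul_eq_mul] at hsum
    exact (mul_eq_zero.mp hsum.symm).resolve_left hNz
  have hP0 : ∀ u ∈ range N, Paux N Z a b u = 0 := by
    intro u hu
    rw [hPc u (mem_range.mp hu), hP00]
  have hfin : ∑ p ∈ range N ×ˢ range N,
      (Z p.1 p.2 : ℂ) * zet N ^ (t * eaux a b p) = 0 := by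
    rw [hgroupC t]
    refine Finset.sum_eq_zero fun u hu => ?_
    rw [hP0 u hu]
    simp
  rw [Finset.sum_product] at hfin
  simpa only [eaux] using hfin
lemma int_zero_of_dvd_abs_le {N : ℕ} (hNpos : 2 ≤ N) {x : ℤ} (hd : (N:ℤ) ∣ x)
    (hx : |x| ≤ (Nat.sqrt N : ℤ)) : x = 0 := by
  refine Int.eq_zero_of_abs_lt_dvd hd ?_
  have h1 : Nat.sqrt N < N := by
    rw [Nat.sqrt_lt]
    nlinarith [hNpos]
  calc |x| ≤ (Nat.sqrt N : ℤ) := hx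
    _ < N := by exact_mod_cast h1

lemma thue {N : ℕ} (hN : N.Prime) (k l : ℤ) :
    ∃ a b t : ℤ, |a| ≤ (Nat.sqrt N : ℤ) ∧ |b| ≤ (Nat.sqrt N : ℤ) ∧
      (N:ℤ) ∣ k - t*a ∧ (N:ℤ) ∣ l - t*b := by
  haveI : Fact N.Prime := ⟨hN⟩
  haveI : NeZero N := ⟨hN.ne_zero⟩
  have hNpos : 0 < N := hN.pos
  have hL1 : (1:ℤ) ≤ (Nat.sqrt N : ℤ) := by
    have := Nat.sqrt_pos.mpr hNpos
    exact_mod_cast this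
  by_cases hk : (k : ZMod N) = 0
  · refine ⟨0, 1, l, by simp, by simpa using hL1, ?_, ?_⟩
    · simpa using (ZMod.intCast_zmod_eq_zero_iff_dvd k N).mp hk
    · simp
  · set s : ZMod N := (l : ZMod N) * (k : ZMod N)⁻¹ with hs
    set L0 := Nat.sqrt N with hL0
    have hcard : (Finset.univ : Finset (ZMod N)).card
        < ((range (L0+1)) ×ˢ (range (L0+1))).card := by
      rw [Finset.card_product, Finset.card_range, Finset.card_univ, ZMod.card]
      have := Nat.lt_succ_sqrt N
      simpa [hL0, Nat.succ_eq_add_one] using this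
    obtain ⟨p, hp, q, hq, hne, hFeq⟩ :=
      Finset.exists_ne_map_eq_of_card_lt_of_maps_to hcard
        (f := fun p : ℕ × ℕ => (p.2 : ZMod N) - s * (p.1 : ZMod N))
        (fun p _ => Finset.mem_univ _)
    simp only [Finset.mem_product, Finset.mem_range] at hp hq
    set x : ℤ := (p.1 : ℤ) - q.1 with hx
    set y : ℤ := (p.2 : ℤ) - q.2 with hy
    have hxb : |x| ≤ (L0 : ℤ) := by rw [abs_le]; constructor <;> [skip; skip] <;> omega
    have hyb : |y| ≤ (L0 : ℤ) := by rw [abs_le]; constructor <;> [skip; skip] <;> omega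
    have hxy : (y : ZMod N) = s * (x : ZMod N) := by
      have : (p.2 : ZMod N) - s * (p.1 : ZMod N)
          = (q.2 : ZMod N) - s * (q.1 : ZMod N) := hFeq
      push_cast [hx, hy]
      linear_combination this
    have hxne : (x : ZMod N) ≠ 0 := by
      intro h0
      have hx0 : x = 0 :=
        int_zero_of_dvd_abs_le hN.two_le ((ZMod.intCast_zmod_eq_zero_iff_dvd x N).mp h0) hxb
      have hy0 : y = 0 := by
        refine int_zero_of_dvd_abs_le hN.two_le
          ((ZMod.intCast_zmod_eq_zero_iff_dvd y N).mp ?_) hyb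
        rw [hxy, h0, mul_zero]
      apply hne
      have h1 : p.1 = q.1 := by omega
      have h2 : p.2 = q.2 := by omega
      exact Prod.ext h1 h2
    set u : ZMod N := (k : ZMod N) * (x : ZMod N)⁻¹ with hu
    refine ⟨x, y, (u.val : ℤ), hxb, hyb, ?_, ?_⟩
    · rw [← ZMod.intCast_zmod_eq_zero_iff_dvd]
      push_cast
      rw [ZMod.natCast_val, ZMod.cast_id, hu]
      field_simp
      simp
    · rw [← ZMod.intCast_zmod_eq_zero_iff_dvd]
      push_cast
      rw [ZMod.natCast_val, ZMod.cast_id, hu, hxy, hs]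
      field_simp
      ring
lemma geom_line {N : ℕ} (hN : N.Prime) (d : ℤ) :
    ∑ kk ∈ range N, zet N ^ ((kk:ℤ) * d)
      = if (N:ℤ) ∣ d then (N:ℂ) else 0 := by
  have hN0 : N ≠ 0 := hN.ne_zero
  by_cases hdvd : (N:ℤ) ∣ d
  · rw [if_pos hdvd]
    have : ∀ kk ∈ range N, zet N ^ ((kk:ℤ) * d) = 1 := by
      intro kk _
      have h1 : zet N ^ ((kk:ℤ) * d) = zet N ^ (0:ℤ) := by
        apply zet_zpow_congr hN0
        simpa using Dvd.dvd.mul_left hdvd (kk:ℤ)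
      rw [h1, zpow_zero]
    rw [Finset.sum_congr rfl this, Finset.sum_const, card_range, nsmul_eq_mul, mul_one]
  · rw [if_neg hdvd]
    have hz1 : zet N ^ d ≠ 1 := fun h =>
      hdvd (((zet_prim hN0).zpow_eq_one_iff_dvd d).mp h)
    have hterm : ∀ kk ∈ range N, zet N ^ ((kk:ℤ) * d) = (zet N ^ d) ^ kk := by
      intro kk _
      rw [mul_comm, zpow_mul, ← zpow_natCast (zet N ^ d) kk]
    rw [Finset.sum_congr rfl hterm, geom_sum_eq hz1]
    have hnum : (zet N ^ d) ^ N = 1 := by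
      rw [← zpow_natCast (zet N ^ d) N, ← zpow_mul, mul_comm, zpow_mul]
      rw [zpow_natCast, (zet_prim hN0).pow_eq_one, one_zpow]
    rw [hnum, sub_self, zero_div]

lemma invZero {N : ℕ} (hN : N.Prime) (Z : ℕ → ℕ → ℤ)
    (hall : ∀ k l : ℤ, ∑ m ∈ range N, ∑ n ∈ range N,
      (Z m n : ℂ) * zet N ^ ((m:ℤ)*k+(n:ℤ)*l) = 0) :
    ∀ m < N, ∀ n < N, Z m n = 0 := by
  intro m₀ hm₀ n₀ hn₀
  have hN0 : N ≠ 0 := hN.ne_zero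
  have hzne := zet_ne_zero N
  have key : ∑ q ∈ range N ×ˢ range N, ∑ p ∈ range N ×ˢ range N,
      (Z p.1 p.2 : ℂ) * zet N ^ ((p.1:ℤ)*q.1 + (p.2:ℤ)*q.2
        - ((m₀:ℤ)*q.1 + (n₀:ℤ)*q.2)) = 0 := by
    refine Finset.sum_eq_zero fun q hq => ?_
    have h := hall q.1 q.2
    have hsplit : ∀ p ∈ range N ×ˢ range N,
        (Z p.1 p.2 : ℂ) * zet N ^ ((p.1:ℤ)*q.1 + (p.2:ℤ)*q.2
          - ((m₀:ℤ)*q.1 + (n₀:ℤ)*q.2))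
        = ((Z p.1 p.2 : ℂ) * zet N ^ ((p.1:ℤ)*q.1 + (p.2:ℤ)*q.2))
            * zet N ^ (-((m₀:ℤ)*q.1 + (n₀:ℤ)*q.2)) := by
      intro p _
      rw [mul_assoc, ← zpow_add₀ hzne, sub_eq_add_neg]
    rw [Finset.sum_congr rfl hsplit, ← Finset.sum_mul]
    have hz : ∑ p ∈ range N ×ˢ range N,
        (Z p.1 p.2 : ℂ) * zet N ^ ((p.1:ℤ)*q.1 + (p.2:ℤ)*q.2) = 0 := by
      rw [Finset.sum_product]
      simpa using h
    rw [hz, zero_mul]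
  rw [Finset.sum_comm] at key
  have hprod : ∀ d1 d2 : ℤ, (∑ q ∈ range N ×ˢ range N,
      zet N ^ ((q.1:ℤ)*d1 + (q.2:ℤ)*d2))
      = (∑ kk ∈ range N, zet N ^ ((kk:ℤ)*d1))
        * (∑ ll ∈ range N, zet N ^ ((ll:ℤ)*d2)) := by
    intro d1 d2
    rw [Finset.sum_mul_sum, Finset.sum_product]
    refine sum_congr rfl fun kk _ => sum_congr rfl fun ll _ => ?_
    rw [← zpow_add₀ hzne]
  have key2 : ∑ p ∈ range N ×ˢ range N, (Z p.1 p.2 : ℂ)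
      * ((∑ kk ∈ range N, zet N ^ ((kk:ℤ)*((p.1:ℤ) - m₀)))
        * (∑ ll ∈ range N, zet N ^ ((ll:ℤ)*((p.2:ℤ) - n₀)))) = 0 := by
    rw [← key]
    refine sum_congr rfl fun p hp => ?_
    rw [← hprod, Finset.mul_sum]
    refine sum_congr rfl fun q hq => ?_
    congr 1
    ring
  have hm₀n₀ : ((m₀, n₀) : ℕ × ℕ) ∈ range N ×ˢ range N := by
    simp [Finset.mem_product, hm₀, hn₀]
  have hsingle := Finset.sum_eq_single_of_mem ((m₀, n₀) : ℕ × ℕ) hm₀n₀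
    (f := fun p : ℕ × ℕ => (Z p.1 p.2 : ℂ)
      * ((∑ kk ∈ range N, zet N ^ ((kk:ℤ)*((p.1:ℤ) - m₀)))
        * (∑ ll ∈ range N, zet N ^ ((ll:ℤ)*((p.2:ℤ) - n₀)))))
    (by
      intro p hp hpne
      simp only [Finset.mem_product, Finset.mem_range] at hp
      rcases Decidable.em (p.1 = m₀) with h1 | h1
      · have h2 : p.2 ≠ n₀ := by
          intro h2
          exact hpne (Prod.ext h1 h2)
        have hnd : ¬ ((N:ℤ) ∣ ((p.2:ℤ) - n₀)) := by
          intro hd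
          have : ((p.2:ℤ) - n₀) = 0 := by
            refine Int.eq_zero_of_abs_lt_dvd hd ?_
            rw [abs_lt]
            constructor <;> [skip; skip] <;> omega
          have : p.2 = n₀ := by omega
          exact h2 this
        rw [geom_line hN ((p.2:ℤ) - (n₀:ℤ)), if_neg hnd]
        ring
      · have hnd : ¬ ((N:ℤ) ∣ ((p.1:ℤ) - m₀)) := by
          intro hd
          have : ((p.1:ℤ) - m₀) = 0 := by
            refine Int.eq_zero_of_abs_lt_dvd hd ?_
            rw [abs_lt]
            constructor <;> [skip; skip] <;> omega
          have : p.1 = m₀ := by omega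
          exact h1 this
        rw [geom_line hN ((p.1:ℤ) - (m₀:ℤ)), if_neg hnd]
        ring)
  rw [key2] at hsingle
  simp only [sub_self] at hsingle
  rw [geom_line hN, if_pos (dvd_zero _)] at hsingle
  have hNC : ((N:ℂ) * N) ≠ 0 := by
    have : (N:ℂ) ≠ 0 := Nat.cast_ne_zero.mpr hN0
    exact mul_ne_zero this this
  have hZ0 : ((Z m₀ n₀ : ℤ) : ℂ) = 0 := by
    rcases mul_eq_zero.mp hsingle.symm with h | h
    · exact h
    · exact absurd h hNC
  exact_mod_cast hZ0
/-- For prime `N` and `L ≥ ⌊√N⌋`, two binary `N × N` matrices agreeing on all DFT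
coefficients in the band `|k|, |l| ≤ L` are equal. -/
theorem binary_square_matrix_unique_from_band
    (N : ℕ) (hN : N.Prime) (L : ℕ) (hL : Nat.sqrt N ≤ L)
    (X Y : ℕ → ℕ → ℤ)
    (hX : ∀ m < N, ∀ n < N, X m n = 0 ∨ X m n = 1)
    (hY : ∀ m < N, ∀ n < N, Y m n = 0 ∨ Y m n = 1)
    (hband : ∀ k l : ℤ, |k| ≤ (L : ℤ) → |l| ≤ (L : ℤ) →
      dft N N X k l = dft N N Y k l) :
    ∀ m < N, ∀ n < N, X m n = Y m n := by
  have hN0 : N ≠ 0 := hN.ne_zero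
  set Z : ℕ → ℕ → ℤ := fun m n => X m n - Y m n with hZ
  have hband' : ∀ a b : ℤ, |a| ≤ (L:ℤ) → |b| ≤ (L:ℤ) →
      ∑ m ∈ range N, ∑ n ∈ range N,
        (Z m n : ℂ) * zet N ^ ((m:ℤ)*a+(n:ℤ)*b) = 0 := by
    intro a b ha hb
    have h := hband a b ha hb
    rw [dft_eq N hN0 X, dft_eq N hN0 Y] at h
    have hsub : ∑ m ∈ range N, ∑ n ∈ range N,
        (Z m n : ℂ) * zet N ^ ((m:ℤ)*a+(n:ℤ)*b)
        = (∑ m ∈ range N, ∑ n ∈ range N,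
            (X m n : ℂ) * zet N ^ ((m:ℤ)*a+(n:ℤ)*b))
          - ∑ m ∈ range N, ∑ n ∈ range N,
            (Y m n : ℂ) * zet N ^ ((m:ℤ)*a+(n:ℤ)*b) := by
      rw [← Finset.sum_sub_distrib]
      refine sum_congr rfl fun m _ => ?_
      rw [← Finset.sum_sub_distrib]
      refine sum_congr rfl fun n _ => ?_
      rw [hZ]
      push_cast
      ring
    rw [hsub, h, sub_self]
  have hsqL : ((Nat.sqrt N : ℤ)) ≤ (L:ℤ) := by exact_mod_cast hL
  have h00 : ∑ m ∈ range N, ∑ n ∈ range N, Z m n = 0 := by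
    have h := hband' 0 0 (by simp) (by simp)
    have h2 : ((∑ m ∈ range N, ∑ n ∈ range N, Z m n : ℤ) : ℂ) = 0 := by
      push_cast
      rw [← h]
      refine sum_congr rfl fun m _ => sum_congr rfl fun n _ => ?_
      norm_num
    exact_mod_cast h2
  have hall : ∀ k l : ℤ, ∑ m ∈ range N, ∑ n ∈ range N,
      (Z m n : ℂ) * zet N ^ ((m:ℤ)*k+(n:ℤ)*l) = 0 := by
    intro k l
    obtain ⟨a, b, t, ha, hb, hka, hlb⟩ := thue hN k l
    have h1 := hband' a b (le_trans ha hsqL) (le_trans hb hsqL)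
    have hkill := line_kill hN Z a b h1 h00 t
    rw [← hkill]
    refine sum_congr rfl fun m hm => sum_congr rfl fun n hn => ?_
    congr 1
    apply zet_zpow_congr hN0
    have heq : (m:ℤ)*k+(n:ℤ)*l - t*((m:ℤ)*a+(n:ℤ)*b)
        = (m:ℤ)*(k - t*a) + (n:ℤ)*(l - t*b) := by ring
    rw [heq]
    exact dvd_add (Dvd.dvd.mul_left hka _) (Dvd.dvd.mul_left hlb _)
  intro m hm n hn
  have hz := invZero hN Z hall m hm n hn
  rw [hZ] at hz
  have : X m n - Y m n = 0 := hz
  linarith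
end

section
/- Let p be an odd prime, α > 1, and N = p^α. Define binary N × N matrices X and Y by X_{nm} = 1 iff n+m ≡ 1 (mod p) and Y_{nm} = 1 iff n+m ≡ 0 (mod p). Then X ≠ Y but X̃_{kl} = Ỹ_{kl} for all |k|, |l| < p^{α−1}. -/
open Finset Complex

open Fin.NatCast in
lemma sum_range_shift (N s : ℕ) (hN : 0 < N) (H : ℕ → ℂ) :
    ∑ n ∈ Finset.range N, H ((n + s) % N) = ∑ n ∈ Finset.range N, H n := by
  haveI : NeZero N := ⟨hN.ne'⟩
  rw [← Fin.sum_univ_eq_sum_range (fun n => H ((n + s) % N)) N,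
      ← Fin.sum_univ_eq_sum_range (fun n => H n) N]
  have h1 : ∀ i : Fin N, H ((i.val + s) % N) = H (((Equiv.addRight (s : Fin N)) i).val) := by
    intro i
    congr 1
    show (i.val + s) % N = (i + (s : Fin N)).val
    rw [Fin.add_def]
    show _ = (i.val + s % N) % N
    conv_lhs => rw [Nat.add_mod, Nat.mod_eq_of_lt i.isLt]
  calc ∑ i : Fin N, H ((i.val + s) % N)
      = ∑ i : Fin N, H (((Equiv.addRight (s : Fin N)) i).val) := by
        exact Finset.sum_congr rfl fun i _ => h1 i
    _ = ∑ i : Fin N, H i.val := Equiv.sum_comp (Equiv.addRight (s : Fin N)) (fun j : Fin N => H j.val)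

lemma per_mod (N : ℕ) (f : ℕ → ℤ) (hf : ∀ n, f (n + N) = f n) (x : ℕ) :
    f x = f (x % N) := by
  conv_lhs => rw [← Nat.mod_add_div x N]
  generalize x / N = q
  induction q with
  | zero => simp
  | succ q ih =>
      rw [Nat.mul_succ, ← add_assoc, hf, ih]

lemma dft_shift (N s : ℕ) (hN : 0 < N) (W Z : ℕ → ℕ → ℤ)
    (hper : ∀ m n, W m (n + N) = W m n)
    (hZ : ∀ m n, Z m n = W m (n + s)) (k l : ℤ) :
    dft N N Z k l
      = Complex.exp (-(2 * Real.pi * Complex.I * ((s : ℂ) * l / N))) * dft N N W k l := by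
  have hNC : (N : ℂ) ≠ 0 := Nat.cast_ne_zero.mpr hN.ne'
  unfold dft
  rw [Finset.mul_sum]
  refine Finset.sum_congr rfl fun m _ => ?_
  rw [Finset.mul_sum]
  have key : ∀ n, (Z m n : ℂ) * Complex.exp (2 * Real.pi * Complex.I *
        ((m : ℂ) * k / N + (n : ℂ) * l / N))
      = Complex.exp (-(2 * Real.pi * Complex.I * ((s : ℂ) * l / N))) *
        ((W m ((n + s) % N) : ℂ) * Complex.exp (2 * Real.pi * Complex.I *
          ((m : ℂ) * k / N + (((n + s) % N : ℕ) : ℂ) * l / N))) := by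
    intro n
    rw [hZ, per_mod N (W m) (hper m) (n + s)]
    set r : ℕ := (n + s) % N with hr
    set q : ℕ := (n + s) / N with hq
    have hns : ((n : ℂ) + s) = (r : ℂ) + (N : ℂ) * q := by
      exact_mod_cast (Nat.mod_add_div (n + s) N).symm
    have hexp : (2 : ℂ) * Real.pi * Complex.I * ((m : ℂ) * k / N + (n : ℂ) * l / N)
        = -(2 * Real.pi * Complex.I * ((s : ℂ) * l / N))
          + 2 * Real.pi * Complex.I * ((m : ℂ) * k / N + (r : ℂ) * l / N)
          + ((q * l : ℤ) : ℂ) * (2 * Real.pi * Complex.I) := by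
      push_cast
      field_simp
      linear_combination (l : ℂ) * hns
    rw [hexp, Complex.exp_add, Complex.exp_add, Complex.exp_int_mul_two_pi_mul_I]
    ring
  rw [Finset.sum_congr rfl fun n _ => key n, ← Finset.mul_sum, ← Finset.mul_sum]
  congr 1
  exact sum_range_shift N s hN
    (fun j => (W m j : ℂ) * Complex.exp (2 * Real.pi * Complex.I *
      ((m : ℂ) * k / N + (j : ℂ) * l / N)))

/-- For an odd prime `p` and `N = p^α` with `α > 1`, the two striped binary matrices
defined by `n + m ≡ 1 (mod p)` and `n + m ≡ 0 (mod p)` (with 1-based indices,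
so `(m+1)+(n+1)` in 0-based indexing) are distinct but agree on all DFT
coefficients with `|k|, |l| < p^(α−1)`. -/
theorem striped_matrices_band_indistinguishable
    (p α N : ℕ) (hp : p.Prime) (hodd : Odd p) (hα : 1 < α) (hN : N = p ^ α)
    (X Y : ℕ → ℕ → ℤ)
    (hXdef : ∀ m n, X m n = if (m + n + 2) % p = 1 % p then 1 else 0)
    (hYdef : ∀ m n, Y m n = if (m + n + 2) % p = 0 then 1 else 0) :
    (∃ m < N, ∃ n < N, X m n ≠ Y m n) ∧
    (∀ k l : ℤ, |k| < (p ^ (α - 1) : ℤ) → |l| < (p ^ (α - 1) : ℤ) →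
      dft N N X k l = dft N N Y k l) := by
  have hp2 : p ≠ 2 := by rintro rfl; exact (Nat.not_odd_iff_even.mpr even_two) hodd
  have hp3 : 2 < p := lt_of_le_of_ne hp.two_le (Ne.symm hp2)
  have hNpos : 0 < N := by rw [hN]; exact pow_pos hp.pos _
  have hNp0 : N % p = 0 := by
    rw [hN]
    exact Nat.mod_eq_zero_of_dvd (dvd_pow_self p (by omega : α ≠ 0))
  -- periodicity of X with period N in the second index
  have hXN : ∀ m n, X m (n + N) = X m n := by
    intro m n
    rw [hXdef, hXdef]
    have h : (m + (n + N) + 2) % p = (m + n + 2) % p := by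
      have e : m + (n + N) + 2 = (m + n + 2) + N := by omega
      rw [e, Nat.add_mod, hNp0, Nat.add_zero, Nat.mod_mod_of_dvd _ dvd_rfl]
    rw [h]
  -- X is p-periodic in the second index
  have hXper : ∀ m n, X m n = X m (n + p) := by
    intro m n
    rw [hXdef, hXdef]
    have h : (m + (n + p) + 2) % p = (m + n + 2) % p := by
      have e : m + (n + p) + 2 = (m + n + 2) + p := by omega
      rw [e, Nat.add_mod_right]
    rw [h]
  -- Y is a unit shift of X
  have hYX : ∀ m n, Y m n = X m (n + 1) := by
    intro m n
    rw [hYdef, hXdef]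
    have h : ((m + (n + 1) + 2) % p = 1 % p) ↔ ((m + n + 2) % p = 0) := by
      have e : m + (n + 1) + 2 = (m + n + 2) + 1 := by omega
      rw [e]
      constructor
      · intro h
        have h2 : (m + n + 2) % p = 0 % p := Nat.ModEq.add_right_cancel' 1 h
        simpa using h2
      · intro h
        have h2 : (m + n + 2) ≡ 0 [MOD p] := by
          unfold Nat.ModEq; simpa using h
        exact h2.add_right 1
    by_cases hc : (m + n + 2) % p = 0
    · rw [if_pos hc, if_pos (h.mpr hc)]
    · rw [if_neg hc, if_neg (fun hh => hc (h.mp hh))]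
  constructor
  · refine ⟨p - 1, ?_, 0, hNpos, ?_⟩
    · calc p - 1 < p := by omega
        _ ≤ p ^ α := Nat.le_self_pow (by omega) p
        _ = N := hN.symm
    · rw [hXdef, hYdef]
      have e : p - 1 + 0 + 2 = 1 + p := by omega
      have h1 : (p - 1 + 0 + 2) % p = 1 % p := by rw [e, Nat.add_mod_right]
      have h2 : (1 : ℕ) % p = 1 := Nat.mod_eq_of_lt (by omega)
      rw [if_pos h1, if_neg (by rw [h1, h2]; omega)]
      omega
  · intro k l hk hl
    have h1 := dft_shift N 1 hNpos X Y hXN hYX k l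
    by_cases hl0 : l = 0
    · subst hl0
      rw [h1]
      norm_num
    · have h2 := dft_shift N p hNpos X X hXN hXper k l
      set c : ℂ := Complex.exp (-(2 * Real.pi * Complex.I * ((p : ℂ) * (l : ℂ) / N))) with hc
      have hcne : c ≠ 1 := by
        intro hone
        rw [hc, Complex.exp_eq_one_iff] at hone
        obtain ⟨z, hz⟩ := hone
        have h2pi : (2 * (Real.pi : ℂ) * Complex.I) ≠ 0 :=
          mul_ne_zero (mul_ne_zero two_ne_zero
            (Complex.ofReal_ne_zero.mpr Real.pi_ne_zero)) Complex.I_ne_zero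
        have h4 : (2 * (Real.pi : ℂ) * Complex.I) * (-((p : ℂ) * (l : ℂ) / N))
            = (2 * (Real.pi : ℂ) * Complex.I) * z := by linear_combination hz
        have h5 : -((p : ℂ) * (l : ℂ) / N) = z := mul_left_cancel₀ h2pi h4
        have hNC : (N : ℂ) ≠ 0 := Nat.cast_ne_zero.mpr hNpos.ne'
        have h6 : ((p * l : ℤ) : ℂ) = ((-z * N : ℤ) : ℂ) := by
          push_cast
          field_simp at h5
          linear_combination -h5
        have h7 : (p : ℤ) * l = -z * N := by exact_mod_cast h6
        have hNZ : (N : ℤ) = (p : ℤ) * (p : ℤ) ^ (α - 1) := by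
          rw [hN]
          push_cast
          rw [← pow_succ']
          congr 1
          omega
        have h8 : (p : ℤ) * l = (p : ℤ) * (-z * (p : ℤ) ^ (α - 1)) := by
          rw [h7, hNZ]; ring
        have h9 : l = -z * (p : ℤ) ^ (α - 1) :=
          mul_left_cancel₀ (by exact_mod_cast hp.pos.ne') h8
        have hdvd : ((p : ℤ) ^ (α - 1)) ∣ l := ⟨-z, by rw [h9]; ring⟩
        have := Int.le_of_dvd (abs_pos.mpr hl0) ((dvd_abs _ _).mpr hdvd)
        omega
      have h3 : (1 - c) * dft N N X k l = 0 := by linear_combination h2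
      rcases mul_eq_zero.mp h3 with h | h
      · exact absurd (sub_eq_zero.mp h).symm hcne
      · rw [h1, h, mul_zero]
end
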